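/- arXiv:2501.08684 — 7 statements merged into one kernel-verified Lean document; each statement's English description precedes it below -/
import Mathlib

section
/- A cyclic binary configuration x of odd length satisfies s(x) = 0 if and only if x is homogeneous (all 0s or all 1s), where s(x) counts the switches of x. -/
/-- The parity (XOR of all cells) of a cyclic binary configuration. -/
def Par {n : ℕ} [NeZero n] (x : ZMod n → Bool) : ZMod 2 :=
  ∑ i : ZMod n, if x i then 1 else 0

/-- The global CA rule induced by a local rule of radius `r`
on cyclic configurations of length `n`. -/
def globalRule (r : ℕ) (f : (Fin (2*r+1) → Bool) → Bool) {n : ℕ}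
    (x : ZMod n → Bool) : ZMod n → Bool :=
  fun i => f (fun j => x (i + ((j : ℕ) : ZMod n) - (r : ZMod n)))

/-- The active (center-flipping) neighbourhoods of the corrected BFO rule
(transitions T1–T12; the center is cell 4 of 9). -/
def bfoActive (w : Fin 9 → Bool) : Bool :=
  (w 1 && w 2 && w 3 && !w 4 && !w 5) ||               -- T1
  (w 0 && w 1 && w 2 && !w 3 && !w 4) ||               -- T2
  (!w 1 && !w 2 && w 3 && !w 4 && !w 5) ||             -- T3
  (!w 0 && !w 1 && w 2 && !w 3 && !w 4) ||             -- T4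
  (!w 3 && w 4 && w 5 && !w 6) ||                      -- T5
  (!w 2 && w 3 && w 4 && !w 5) ||                      -- T6
  (!w 1 && !w 2 && w 3 && !w 4 && w 5 && !w 6) ||      -- T7
  (!w 2 && !w 3 && w 4 && !w 5 && w 6 && !w 7) ||      -- T8
  (w 3 && w 4 && w 5 && !w 6 && w 7) ||                -- T9
  (w 0 && w 1 && w 2 && !w 3 && w 4 && !w 5) ||        -- T10
  (w 0 && w 1 && w 2 && !w 3 && w 4 && w 5 && w 6) ||  -- T11
  (w 2 && w 3 && w 4 && !w 5 && w 6 && w 7 && !w 8)    -- T12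

/-- The corrected BFO local rule (radius 4). -/
def bfoLocal (w : Fin 9 → Bool) : Bool := xor (bfoActive w) (w 4)

/-- The global rule induced by the corrected BFO rule. -/
def bfoGlobal {n : ℕ} (x : ZMod n → Bool) : ZMod n → Bool :=
  globalRule 4 bfoLocal x

/-- `x i x (i+1)` is a box: the pattern 01 preceded by 1 and followed by 00. -/
def IsBox {n : ℕ} (x : ZMod n → Bool) (i : ZMod n) : Prop :=
  x (i-1) = true ∧ x i = false ∧ x (i+1) = true ∧ x (i+2) = false ∧ x (i+3) = false

/-- Cell `j` belongs to some box of `x`. -/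
def InBox {n : ℕ} (x : ZMod n → Bool) (j : ZMod n) : Prop :=
  ∃ i, IsBox x i ∧ (j = i ∨ j = i + 1)

/-- `x` has a switch at position `i`: either a b-switch (a box at `i+1`)
or an r-switch (`x i ≠ x (i+1)` with neither cell in a box). -/
def IsSwitch {n : ℕ} (x : ZMod n → Bool) (i : ZMod n) : Prop :=
  IsBox x (i+1) ∨ (x i ≠ x (i+1) ∧ ¬ InBox x i ∧ ¬ InBox x (i+1))

/-- The number of switches of the configuration `x`. -/
noncomputable def switchCount {n : ℕ} (x : ZMod n → Bool) : ℕ :=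
  Nat.card {i : ZMod n // IsSwitch x i}

/-- The block of length `2k+2` starting at position `i` is an ordered block. -/
def IsOrderedBlock {n : ℕ} (x : ZMod n → Bool) (i : ZMod n) (k : ℕ) : Prop :=
  (∀ j ≤ k, ¬ (x (i + 2*j) = true ∧ x (i + 2*j + 1) = false)) ∧
  (x i = false ∧ x (i+1) = true) ∧
  ¬ (x (i + 2*k) = false ∧ x (i + 2*k + 1) = true) ∧
  (x (i + 2*k) = true ∧ x (i + 2*k + 1) = true → x (i + 2*k + 2) = false)

/-- An ordered block which is not a proper sub-block of another ordered block. -/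
def IsMaximalOrderedBlock {n : ℕ} (x : ZMod n → Bool) (i : ZMod n) (k : ℕ) : Prop :=
  IsOrderedBlock x i k ∧
  ∀ (i' : ZMod n) (k' d : ℕ), IsOrderedBlock x i' k' →
    i = i' + 2*d → 2*d + 2*k + 2 ≤ 2*k' + 2 → d = 0 ∧ k = k'

/-- `x` contains the word `w` starting at position `i`. -/
def ContainsAt {n : ℕ} (x : ZMod n → Bool) (i : ZMod n) (w : List Bool) : Prop :=
  ∀ j : Fin w.length, x (i + ((j : ℕ) : ZMod n)) = w.get j

/-- `x` belongs to `X_s`: the switch count is constant during the whole evolution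
under the corrected BFO rule. -/
def InXs {n : ℕ} (x : ZMod n → Bool) : Prop :=
  ∀ t : ℕ, switchCount (bfoGlobal^[t] x) = switchCount x

/-- Membership of the neighbourhood of cell `i` in one of the AT pairs
`T_{1,2}`, `T_{3,4}` (center at `i`). -/
def MatchT1234 {n : ℕ} (y : ZMod n → Bool) (i : ZMod n) : Prop :=
  (y (i-3) = true ∧ y (i-2) = true ∧ y (i-1) = true ∧ y i = false ∧ y (i+1) = false) ∨
  (y (i-4) = true ∧ y (i-3) = true ∧ y (i-2) = true ∧ y (i-1) = false ∧ y i = false) ∨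
  (y (i-3) = false ∧ y (i-2) = false ∧ y (i-1) = true ∧ y i = false ∧ y (i+1) = false) ∨
  (y (i-4) = false ∧ y (i-3) = false ∧ y (i-2) = true ∧ y (i-1) = false ∧ y i = false)

/-- The `k`-fold concatenation of a configuration of length `n`. -/
def concatK {n : ℕ} (k : ℕ) (x : ZMod n → Bool) : ZMod (k*n) → Bool :=
  fun i => x ((i.val : ZMod n))

/-- A cyclic binary configuration of odd length has switch count 0
iff it is homogeneous. -/
theorem switchCount_eq_zero_iff_homogeneous (n : ℕ) [NeZero n] (hn : Odd n)
    (x : ZMod n → Bool) :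
    switchCount x = 0 ↔ ((x = fun _ => false) ∨ (x = fun _ => true)) := by
  constructor
  · intro h
    have hempty : ∀ i : ZMod n, ¬ IsSwitch x i := by
      intro i hi
      have : Nat.card {i : ZMod n // IsSwitch x i} ≠ 0 := by
        have : Nonempty {i : ZMod n // IsSwitch x i} := ⟨⟨i, hi⟩⟩
        exact Nat.card_ne_zero.mpr ⟨this, inferInstance⟩
      exact this h
    have hnobox : ∀ j : ZMod n, ¬ IsBox x j := by
      intro j hj
      exact hempty (j - 1) (Or.inl (by simpa using hj))
    have hnoin : ∀ j : ZMod n, ¬ InBox x j := by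
      rintro j ⟨i, hi, _⟩; exact hnobox i hi
    have heq : ∀ i : ZMod n, x i = x (i + 1) := by
      intro i
      by_contra hne
      exact hempty i (Or.inr ⟨hne, hnoin i, hnoin (i + 1)⟩)
    have hnat : ∀ m : ℕ, x (m : ZMod n) = x 0 := by
      intro m
      induction m with
      | zero => simp
      | succ k ih => rw [← ih, Nat.cast_succ]; exact (heq (k : ZMod n)).symm
    have hconst : ∀ j : ZMod n, x j = x 0 := by
      intro j
      have := hnat j.val
      rwa [ZMod.natCast_val, ZMod.cast_id] at this
    cases h0 : x 0 with
    | false => left; funext j; rw [hconst j, h0]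
    | true => right; funext j; rw [hconst j, h0]
  · intro h
    have hno : ∀ i : ZMod n, ¬ IsSwitch x i := by
      rcases h with h | h <;> subst h <;>
      · rintro i (⟨_, h1, h2, _⟩ | ⟨hne, _, _⟩) <;> simp_all
    have : IsEmpty {i : ZMod n // IsSwitch x i} :=
      ⟨fun ⟨i, hi⟩ => hno i hi⟩
    simp [switchCount, Nat.card_eq_zero, this]
end

section
/- An ordered block contained in a cyclic binary configuration of odd length 2n−1 has length at most 2n. -/
/-- An ordered block contained in a cyclic binary configuration of
odd length `2n-1` has length (namely `2k+2`) at most `2n`. -/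
theorem orderedBlock_length_le (n : ℕ) (hn : 1 ≤ n)
    (x : ZMod (2*n-1) → Bool) (i : ZMod (2*n-1)) (k : ℕ)
    (h : IsOrderedBlock x i k) :
    2*k + 2 ≤ 2*n := by
  by_contra hlt
  push_neg at hlt
  have hk : n ≤ k := by omega
  obtain ⟨hC1, ⟨h0, h1⟩, hC2, hC3⟩ := h
  have hzero : ((2*n-1 : ℕ) : ZMod (2*n-1)) = 0 := ZMod.natCast_self _
  -- From C1, derive a run of `true`s after position i.
  have key : ∀ m : ℕ, 1 ≤ m → m ≤ 2*(k-n)+2 → x (i + (m : ZMod (2*n-1))) = true := by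
    intro m
    induction m with
    | zero => intro h1' _; omega
    | succ m ih =>
      intro _ hle
      rcases Nat.eq_zero_or_pos m with hm0 | hm1
      · subst hm0; simpa using h1
      · have hm : x (i + (m : ZMod (2*n-1))) = true := ih (by omega) (by omega)
        rcases Nat.even_or_odd m with ⟨j, hj⟩ | ⟨c, hc⟩
        · -- m = 2*j
          have hjk : j ≤ k := by omega
          have e : (2 * (j : ZMod (2*n-1)) : ZMod (2*n-1)) = (m : ZMod (2*n-1)) := by
            have hnat : 2*j = m := by omega
            calc (2 * (j : ZMod (2*n-1)) : ZMod (2*n-1))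
                = ((2*j : ℕ) : ZMod (2*n-1)) := by push_cast; ring
              _ = (m : ZMod (2*n-1)) := by rw [hnat]
          have hc1 := hC1 j hjk
          rw [e] at hc1
          push_cast
          simp only [hm, true_and] at hc1
          rw [← add_assoc]; simpa using hc1
        · -- m = 2*c + 1 : use j = c + n, since 2*(c+n) = m + (2n-1) ≡ m
          have hjk : c + n ≤ k := by omega
          have e : (2 * ((c+n : ℕ) : ZMod (2*n-1)) : ZMod (2*n-1)) = (m : ZMod (2*n-1)) := by
            have hnat : 2*(c+n) = m + (2*n-1) := by omega
            calc (2 * ((c+n : ℕ) : ZMod (2*n-1)) : ZMod (2*n-1))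
                = ((2*(c+n) : ℕ) : ZMod (2*n-1)) := by push_cast; ring
              _ = ((m + (2*n-1) : ℕ) : ZMod (2*n-1)) := by rw [hnat]
              _ = (m : ZMod (2*n-1)) := by rw [Nat.cast_add, hzero, add_zero]
          have hc1 := hC1 (c+n) hjk
          rw [e] at hc1
          push_cast
          simp only [hm, true_and] at hc1
          rw [← add_assoc]; simpa using hc1
  -- Let a = 2*(k-n)+1; then 2*k ≡ a (mod 2n-1).
  set a : ℕ := 2*(k-n)+1 with ha
  have e2k : (2 * (k : ZMod (2*n-1)) : ZMod (2*n-1)) = (a : ZMod (2*n-1)) := by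
    have hnat : 2*k = a + (2*n-1) := by omega
    calc (2 * (k : ZMod (2*n-1)) : ZMod (2*n-1))
        = ((2*k : ℕ) : ZMod (2*n-1)) := by push_cast; ring
      _ = ((a + (2*n-1) : ℕ) : ZMod (2*n-1)) := by rw [hnat]
      _ = (a : ZMod (2*n-1)) := by rw [Nat.cast_add, hzero, add_zero]
  have hxa : x (i + (a : ZMod (2*n-1))) = true := key a (by omega) (by omega)
  have hxa1 : x (i + ((a+1 : ℕ) : ZMod (2*n-1))) = true := key (a+1) (by omega) (by omega)
  rw [e2k] at hC2 hC3
  -- From C3, x (i + a + 2) = false.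
  have hxa2 : x (i + (a : ZMod (2*n-1)) + 2) = false := by
    apply hC3
    constructor
    · exact hxa
    · have : (i + (a : ZMod (2*n-1)) + 1) = i + ((a+1 : ℕ) : ZMod (2*n-1)) := by
        push_cast; ring
      rw [this]; exact hxa1
  -- But C1 at j = k-n+1 (with 2*(k-n+1) = a+1) forbids true-false there.
  have hjk : k - n + 1 ≤ k := by omega
  have hc1 := hC1 (k-n+1) hjk
  have e3 : (2 * ((k-n+1 : ℕ) : ZMod (2*n-1)) : ZMod (2*n-1)) = ((a+1 : ℕ) : ZMod (2*n-1)) := by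
    have hnat : 2*(k-n+1) = a + 1 := by omega
    calc (2 * ((k-n+1 : ℕ) : ZMod (2*n-1)) : ZMod (2*n-1))
        = ((2*(k-n+1) : ℕ) : ZMod (2*n-1)) := by push_cast; ring
      _ = ((a+1 : ℕ) : ZMod (2*n-1)) := by rw [hnat]
  rw [e3] at hc1
  apply hc1
  constructor
  · exact hxa1
  · have : (i + ((a+1 : ℕ) : ZMod (2*n-1)) + 1) = i + (a : ZMod (2*n-1)) + 2 := by
      push_cast; ring
    rw [this]; exact hxa2
end

section
/- Let F be the global rule on odd cyclic configurations induced by the corrected BFO local rule of radius 4. Then F preserves parity: for every configuration x of odd length, Par(F(x)) = Par(x). -/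
def gList : List Bool := [false, false, false, false, true, false, false, true, false, false, false, false, false, false, false, false, false, false, false, false, false, false, false, true, true, true, true, true, false, false, false, false, false, false, false, false, true, false, false, true, true, true, false, false, false, false, true, true, false, false, false, false, false, false, false, false, false, false, false, false, false, false, false, false, false, false, false, false, true, false, false, true, false, false, false, false, false, false, false, false, false, false, false, false, false, false, false, true, true, true, true, true, true, true, true, true, false, false, false, false, true, false, false, true, false, false, false, false, false, false, false, false, false, false, false, false, false, false, false, true, false, false, false, false, false, false, false, false, false, false, false, false, true, false, false, true, false, false, false, false, false, false, false, false, false, false, false, false, false, false, false, true, true, true, true, true, false, false, false, false, false, false, false, false, true, false, false, true, true, true, false, false, false, false, true, true, false, false, false, false, false, false, false, false, false, false, false, false, false, false, false, false, false, false, false, false, true, false, false, true, false, false, false, false, false, false, false, false, false, false, false, false, false, false, false, true, true, true, true, true, true, true, true, true, false, false, false, false, true, false, false, true, false, false, false, false, false, false, true, true, false, false, false, false, false, false, false, true, false, false, false, false, false, false, false, false]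

def gfun (w : Fin 8 → Bool) : Bool :=
  gList.getD ((if w 0 then 1 else 0) + 2*(if w 1 then 1 else 0) + 4*(if w 2 then 1 else 0) +
    8*(if w 3 then 1 else 0) + 16*(if w 4 then 1 else 0) + 32*(if w 5 then 1 else 0) +
    64*(if w 6 then 1 else 0) + 128*(if w 7 then 1 else 0)) false

set_option maxRecDepth 100000 in
lemma bfo_cobound : ∀ w : Fin 9 → Bool,
    bfoActive w = xor (gfun (fun j => w j.castSucc)) (gfun (fun j => w j.succ)) := by
  decide

lemma ind_xor (a b : Bool) :
    (if xor a b then (1:ZMod 2) else 0) = (if a then 1 else 0) + (if b then 1 else 0) := by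
  cases a <;> cases b <;> decide

/-- The corrected BFO rule preserves parity. -/
theorem bfo_preserves_parity (n : ℕ) [NeZero n] (hn : Odd n)
    (x : ZMod n → Bool) :
    Par (bfoGlobal x) = Par x := by
  classical
  set G : ZMod n → Bool := fun i => gfun (fun j : Fin 8 => x (i + ((j : ℕ) : ZMod n) - 4)) with hG
  have step : ∀ i : ZMod n, bfoGlobal x i = xor (xor (G i) (G (i+1))) (x i) := by
    intro i
    have hk := bfo_cobound (fun j : Fin 9 => x (i + ((j : ℕ) : ZMod n) - 4))
    show bfoLocal (fun j : Fin 9 => x (i + ((j : ℕ) : ZMod n) - (4 : ZMod n))) = _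
    unfold bfoLocal
    rw [hk]
    have h1 : (gfun fun j : Fin 8 =>
        x (i + (((j.castSucc : Fin 9) : ℕ) : ZMod n) - 4)) = G i := by
      simp [hG, Fin.coe_castSucc]
    have h2 : (gfun fun j : Fin 8 =>
        x (i + (((j.succ : Fin 9) : ℕ) : ZMod n) - 4)) = G (i+1) := by
      simp only [hG]
      congr 1
      funext j
      congr 1
      have : ((j.succ : Fin 9) : ℕ) = (j : ℕ) + 1 := rfl
      rw [this]
      push_cast
      ring
    rw [h1, h2]
    show ((G i ^^ G (i+1)) ^^ x (i + ((4 : ℕ) : ZMod n) - 4)) = _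
    congr 1
    congr 1
    push_cast
    ring
  calc Par (bfoGlobal x)
      = ∑ i : ZMod n, ((if G i then (1:ZMod 2) else 0) + (if G (i+1) then 1 else 0)
          + (if x i then 1 else 0)) := by
        unfold Par
        refine Finset.sum_congr rfl fun i _ => ?_
        rw [step i, ind_xor, ind_xor]
    _ = (∑ i : ZMod n, (if G i then (1:ZMod 2) else 0))
          + (∑ i : ZMod n, (if G (i+1) then (1:ZMod 2) else 0)) + Par x := by
        rw [Par, ← Finset.sum_add_distrib, ← Finset.sum_add_distrib]
    _ = Par x := by
        have he : (∑ i : ZMod n, (if G (i+1) then (1:ZMod 2) else 0))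
            = ∑ i : ZMod n, (if G i then (1:ZMod 2) else 0) :=
          Fintype.sum_equiv (Equiv.addRight 1) _ _ (fun i => rfl)
        rw [he]
        have : ∀ a : ZMod 2, a + a = 0 := by decide
        rw [this, zero_add]
end

section
/- The only fixed points of the global rule induced by the corrected BFO rule on odd cyclic configurations are the two homogeneous configurations (all 0s and all 1s). -/
section BfoFixedAux

variable {n : ℕ}

lemma winEq (x : ZMod n → Bool) (c d : ZMod n) (j : Fin 9) (jn : ℕ)
    (hjn : (j : ℕ) = jn) (h : c + (jn : ZMod n) - 4 = d) :
    x (c + ((j : ℕ) : ZMod n) - ((4:ℕ) : ZMod n)) = x d := by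
  rw [hjn]
  have e : c + (jn : ZMod n) - ((4:ℕ) : ZMod n) = d := by push_cast; exact h
  rw [e]

lemma bfoT1' {W : Fin 9 → Bool} (h : bfoActive W = false)
    (h1 : W 1 = true) (h2 : W 2 = true) (h3 : W 3 = true) (h4 : W 4 = false)
    (h5 : W 5 = false) : False := by
  simp [bfoActive, h1, h2, h3, h4, h5] at h

lemma bfoT3' {W : Fin 9 → Bool} (h : bfoActive W = false)
    (h1 : W 1 = false) (h2 : W 2 = false) (h3 : W 3 = true) (h4 : W 4 = false)
    (h5 : W 5 = false) : False := by
  simp [bfoActive, h1, h2, h3, h4, h5] at h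

lemma bfoT5' {W : Fin 9 → Bool} (h : bfoActive W = false)
    (h3 : W 3 = false) (h4 : W 4 = true) (h5 : W 5 = true) (h6 : W 6 = false) : False := by
  simp [bfoActive, h3, h4, h5, h6] at h

lemma bfoT7' {W : Fin 9 → Bool} (h : bfoActive W = false)
    (h1 : W 1 = false) (h2 : W 2 = false) (h3 : W 3 = true) (h4 : W 4 = false)
    (h5 : W 5 = true) (h6 : W 6 = false) : False := by
  simp [bfoActive, h1, h2, h3, h4, h5, h6] at h

lemma bfoT9' {W : Fin 9 → Bool} (h : bfoActive W = false)
    (h3 : W 3 = true) (h4 : W 4 = true) (h5 : W 5 = true) (h6 : W 6 = false)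
    (h7 : W 7 = true) : False := by
  simp [bfoActive, h3, h4, h5, h6, h7] at h

end BfoFixedAux

/-- The only fixed points of the corrected BFO rule on odd cyclic
configurations are the two homogeneous configurations. -/
theorem bfo_fixed_points (n : ℕ) (hn : Odd n) (x : ZMod n → Bool) :
    bfoGlobal x = x ↔ ((x = fun _ => false) ∨ (x = fun _ => true)) := by
  constructor
  · intro hfix
    haveI : NeZero n := ⟨by obtain ⟨m, hm⟩ := hn; omega⟩
    -- the rule never fires
    have hQ : ∀ c : ZMod n,
        bfoActive (fun j : Fin 9 => x (c + ((j : ℕ) : ZMod n) - ((4:ℕ) : ZMod n))) = false := by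
      intro c
      have h : bfoLocal (fun j : Fin 9 => x (c + ((j : ℕ) : ZMod n) - ((4:ℕ) : ZMod n))) = x c :=
        congrFun hfix c
      rw [bfoLocal] at h
      rw [winEq x c c 4 4 rfl (by push_cast; ring)] at h
      cases hxc : x c <;> rw [hxc] at h <;> simpa using h
    -- forbidden patterns
    have P11100 : ∀ i : ZMod n, x i = true → x (i+1) = true → x (i+2) = true →
        x (i+3) = false → x (i+4) = false → False := by
      intro i h0 h1 h2 h3 h4
      refine bfoT1' (hQ (i+3)) ?_ ?_ ?_ ?_ ?_
      · rw [winEq x (i+3) i 1 1 rfl (by push_cast; ring)]; exact h0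
      · rw [winEq x (i+3) (i+1) 2 2 rfl (by push_cast; ring)]; exact h1
      · rw [winEq x (i+3) (i+2) 3 3 rfl (by push_cast; ring)]; exact h2
      · rw [winEq x (i+3) (i+3) 4 4 rfl (by push_cast; ring)]; exact h3
      · rw [winEq x (i+3) (i+4) 5 5 rfl (by push_cast; ring)]; exact h4
    have P11101 : ∀ i : ZMod n, x i = true → x (i+1) = true → x (i+2) = true →
        x (i+3) = false → x (i+4) = true → False := by
      intro i h0 h1 h2 h3 h4
      refine bfoT9' (hQ (i+1)) ?_ ?_ ?_ ?_ ?_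
      · rw [winEq x (i+1) i 3 3 rfl (by push_cast; ring)]; exact h0
      · rw [winEq x (i+1) (i+1) 4 4 rfl (by push_cast; ring)]; exact h1
      · rw [winEq x (i+1) (i+2) 5 5 rfl (by push_cast; ring)]; exact h2
      · rw [winEq x (i+1) (i+3) 6 6 rfl (by push_cast; ring)]; exact h3
      · rw [winEq x (i+1) (i+4) 7 7 rfl (by push_cast; ring)]; exact h4
    have P00100 : ∀ i : ZMod n, x i = false → x (i+1) = false → x (i+2) = true →
        x (i+3) = false → x (i+4) = false → False := by
      intro i h0 h1 h2 h3 h4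
      refine bfoT3' (hQ (i+3)) ?_ ?_ ?_ ?_ ?_
      · rw [winEq x (i+3) i 1 1 rfl (by push_cast; ring)]; exact h0
      · rw [winEq x (i+3) (i+1) 2 2 rfl (by push_cast; ring)]; exact h1
      · rw [winEq x (i+3) (i+2) 3 3 rfl (by push_cast; ring)]; exact h2
      · rw [winEq x (i+3) (i+3) 4 4 rfl (by push_cast; ring)]; exact h3
      · rw [winEq x (i+3) (i+4) 5 5 rfl (by push_cast; ring)]; exact h4
    have P001010 : ∀ i : ZMod n, x i = false → x (i+1) = false → x (i+2) = true →
        x (i+3) = false → x (i+4) = true → x (i+5) = false → False := by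
      intro i h0 h1 h2 h3 h4 h5
      refine bfoT7' (hQ (i+3)) ?_ ?_ ?_ ?_ ?_ ?_
      · rw [winEq x (i+3) i 1 1 rfl (by push_cast; ring)]; exact h0
      · rw [winEq x (i+3) (i+1) 2 2 rfl (by push_cast; ring)]; exact h1
      · rw [winEq x (i+3) (i+2) 3 3 rfl (by push_cast; ring)]; exact h2
      · rw [winEq x (i+3) (i+3) 4 4 rfl (by push_cast; ring)]; exact h3
      · rw [winEq x (i+3) (i+4) 5 5 rfl (by push_cast; ring)]; exact h4
      · rw [winEq x (i+3) (i+5) 6 6 rfl (by push_cast; ring)]; exact h5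
    have P0110 : ∀ i : ZMod n, x i = false → x (i+1) = true → x (i+2) = true →
        x (i+3) = false → False := by
      intro i h0 h1 h2 h3
      refine bfoT5' (hQ (i+1)) ?_ ?_ ?_ ?_
      · rw [winEq x (i+1) i 3 3 rfl (by push_cast; ring)]; exact h0
      · rw [winEq x (i+1) (i+1) 4 4 rfl (by push_cast; ring)]; exact h1
      · rw [winEq x (i+1) (i+2) 5 5 rfl (by push_cast; ring)]; exact h2
      · rw [winEq x (i+1) (i+3) 6 6 rfl (by push_cast; ring)]; exact h3
    -- 111 propagates
    have L1110 : ∀ i : ZMod n, x i = true → x (i+1) = true → x (i+2) = true →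
        x (i+3) = true := by
      intro i h0 h1 h2
      cases h3 : x (i+3) with
      | true => rfl
      | false =>
        cases h4 : x (i+4) with
        | false => exact (P11100 i h0 h1 h2 h3 h4).elim
        | true => exact (P11101 i h0 h1 h2 h3 h4).elim
    -- propagation along the cycle gives constancy
    have hprop : ∀ (i : ZMod n) (b : Bool), (∀ k : ℕ, x (i + (k : ZMod n)) = b) →
        x = fun _ => b := by
      intro i b h
      funext j
      have hj := h ((j - i).val)
      rwa [ZMod.natCast_val, ZMod.cast_id, show i + (j - i) = j from by ring] at hj
    by_cases h111 : ∃ i : ZMod n, x i = true ∧ x (i+1) = true ∧ x (i+2) = true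
    · obtain ⟨i, e0, e1, e2⟩ := h111
      right
      apply hprop i true
      have key : ∀ k : ℕ, x (i + (k : ZMod n)) = true ∧ x (i + (k : ZMod n) + 1) = true ∧
          x (i + (k : ZMod n) + 2) = true := by
        intro k
        induction k with
        | zero => exact ⟨by simpa using e0, by simpa using e1, by simpa using e2⟩
        | succ k ih =>
          obtain ⟨a0, a1, a2⟩ := ih
          have a3 : x (i + (k : ZMod n) + 3) = true := L1110 (i + (k : ZMod n)) a0 a1 a2
          refine ⟨?_, ?_, ?_⟩
          · rw [show i + ((k+1 : ℕ) : ZMod n) = i + (k : ZMod n) + 1 from by push_cast; ring]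
            exact a1
          · rw [show i + ((k+1 : ℕ) : ZMod n) + 1 = i + (k : ZMod n) + 2 from by push_cast; ring]
            exact a2
          · rw [show i + ((k+1 : ℕ) : ZMod n) + 2 = i + (k : ZMod n) + 3 from by push_cast; ring]
            exact a3
      exact fun k => (key k).1
    · push_neg at h111
      have no11 : ∀ i : ZMod n, x i = true → x (i+1) = true → False := by
        intro i e0 e1
        have e2 : x (i+2) = false := by
          cases h : x (i+2) with
          | false => rfl
          | true => exact absurd h (h111 i e0 e1)
        have em1 : x (i-1) = false := by
          cases h : x (i-1) with
          | false => rfl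
          | true =>
            refine absurd (show x ((i-1)+2) = true from ?_) (h111 (i-1) h ?_)
            · rw [show i-1+2 = i+1 from by ring]; exact e1
            · rw [show i-1+1 = i from by ring]; exact e0
        refine P0110 (i-1) em1 ?_ ?_ ?_
        · rw [show i-1+1 = i from by ring]; exact e0
        · rw [show i-1+2 = i+1 from by ring]; exact e1
        · rw [show i-1+3 = i+2 from by ring]; exact e2
      by_cases h00 : ∃ i : ZMod n, x i = false ∧ x (i+1) = false
      · obtain ⟨i, e0, e1⟩ := h00
        left
        apply hprop i false
        have L00 : ∀ j : ZMod n, x j = false → x (j+1) = false → x (j+2) = false := by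
          intro j f0 f1
          cases h2 : x (j+2) with
          | false => rfl
          | true =>
            have h3 : x (j+3) = false := by
              cases h3 : x (j+3) with
              | false => rfl
              | true =>
                refine (no11 (j+2) h2 ?_).elim
                rw [show j+2+1 = j+3 from by ring]; exact h3
            cases h4 : x (j+4) with
            | false => exact (P00100 j f0 f1 h2 h3 h4).elim
            | true =>
              have h5 : x (j+5) = false := by
                cases h5 : x (j+5) with
                | false => rfl
                | true =>
                  refine (no11 (j+4) h4 ?_).elim
                  rw [show j+4+1 = j+5 from by ring]; exact h5
              exact (P001010 j f0 f1 h2 h3 h4 h5).elim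
        have key : ∀ k : ℕ, x (i + (k : ZMod n)) = false ∧ x (i + (k : ZMod n) + 1) = false := by
          intro k
          induction k with
          | zero => exact ⟨by simpa using e0, by simpa using e1⟩
          | succ k ih =>
            obtain ⟨a0, a1⟩ := ih
            have a2 := L00 (i + (k : ZMod n)) a0 a1
            refine ⟨?_, ?_⟩
            · rw [show i + ((k+1 : ℕ) : ZMod n) = i + (k : ZMod n) + 1 from by push_cast; ring]
              exact a1
            · rw [show i + ((k+1 : ℕ) : ZMod n) + 1 = i + (k : ZMod n) + 2 from by push_cast; ring]
              exact a2
        exact fun k => (key k).1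
      · exfalso
        push_neg at h00
        have step : ∀ i : ZMod n, x (i+2) = x i := by
          intro i
          cases h : x i with
          | false =>
            have h1 : x (i+1) = true := by
              cases h1 : x (i+1) with
              | false => exact absurd h1 (h00 i h)
              | true => rfl
            cases h2 : x (i+2) with
            | false => rfl
            | true =>
              refine (no11 (i+1) h1 ?_).elim
              rw [show i+1+1 = i+2 from by ring]; exact h2
          | true =>
            have h1 : x (i+1) = false := by
              cases h1 : x (i+1) with
              | false => rfl
              | true => exact (no11 i h h1).elim
            cases h2 : x (i+2) with
            | false =>
              have h2' := h00 (i+1) h1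
              rw [show i+1+1 = i+2 from by ring] at h2'
              exact absurd h2 h2'
            | true => rfl
        have pow2 : ∀ k : ℕ, x ((2*k : ℕ) : ZMod n) = x 0 := by
          intro k
          induction k with
          | zero => simp
          | succ k ih =>
            have e : ((2*(k+1) : ℕ) : ZMod n) = ((2*k : ℕ) : ZMod n) + 2 := by push_cast; ring
            rw [e, step]; exact ih
        have hconst : ∀ j : ZMod n, x j = x 0 := by
          intro j
          obtain ⟨m, hm⟩ := hn
          have e1 : (2 * (j.val * (m+1)) : ℕ) = j.val * n + j.val := by
            have h2 : 2*(m+1) = n + 1 := by omega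
            calc 2 * (j.val * (m+1)) = j.val * (2*(m+1)) := by ring
              _ = j.val * (n+1) := by rw [h2]
              _ = j.val * n + j.val := by ring
          have hj : ((2 * (j.val * (m+1)) : ℕ) : ZMod n) = j := by
            rw [e1]
            push_cast [ZMod.natCast_self]
            rw [ZMod.natCast_val, ZMod.cast_id]
            ring
          rw [← hj, pow2]
        cases h0 : x 0 with
        | false =>
          have h1 : x (0+1) = false := by rw [hconst (0+1)]; exact h0
          exact (h00 0 h0) h1
        | true =>
          have h1 : x (0+1) = true := by rw [hconst (0+1)]; exact h0
          exact no11 0 h0 h1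
  · rintro (rfl | rfl) <;> funext i <;>
      simp [bfoGlobal, globalRule, bfoLocal, bfoActive]
end

section
/- For the corrected BFO rule, if a configuration x of odd length contains the block 0010101 (the domain D_{7,8}^r), then s(F(x)) < s(x). -/
namespace BfoCert

def box3 (a b c d e : Bool) : Bool := a && !b && c && !d && !e

def switch7 (a b c d e f g : Bool) : Bool :=
  let xm := box3 a b c d e
  let x0 := box3 b c d e f
  let x1 := box3 c d e f g
  x1 || ((c != d) && !(x0 || xm) && !(x1 || x0))

def bfo9 (w0 w1 w2 w3 w4 w5 w6 w7 w8 : Bool) : Bool :=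
  xor (
  (w1 && w2 && w3 && !w4 && !w5) ||
  (w0 && w1 && w2 && !w3 && !w4) ||
  (!w1 && !w2 && w3 && !w4 && !w5) ||
  (!w0 && !w1 && w2 && !w3 && !w4) ||
  (!w3 && w4 && w5 && !w6) ||
  (!w2 && w3 && w4 && !w5) ||
  (!w1 && !w2 && w3 && !w4 && w5 && !w6) ||
  (!w2 && !w3 && w4 && !w5 && w6 && !w7) ||
  (w3 && w4 && w5 && !w6 && w7) ||
  (w0 && w1 && w2 && !w3 && w4 && !w5) ||
  (w0 && w1 && w2 && !w3 && w4 && w5 && w6) ||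
  (w2 && w3 && w4 && !w5 && w6 && w7 && !w8)) w4

def PHI (b0 b1 b2 b3 b4 b5 b6 b7 b8 b9 : Bool) : ℕ := (cond b9 (cond b8 (cond b7 (cond b6 (cond b5 (cond b4 (cond b3 2 (cond b2 (cond b1 (cond b0 2 0) (cond b0 1 2)) (cond b1 (cond b0 0 2) 2))) (cond b3 (cond b2 (cond b1 2 0) (cond b1 (cond b0 0 1) 2)) (cond b2 (cond b1 0 (cond b0 2 0)) 2))) (cond b4 (cond b3 (cond b2 1 0) (cond b2 (cond b1 0 (cond b0 1 0)) (cond b1 (cond b0 0 2) 2))) (cond b3 (cond b2 0 (cond b1 2 0)) (cond b2 (cond b1 (cond b0 2 0) 2) 2)))) (cond b5 (cond b4 (cond b3 2 0) (cond b3 (cond b2 0 (cond b1 (cond b0 0 1) 0)) (cond b2 (cond b1 0 (cond b0 2 0)) 2))) (cond b4 (cond b3 (cond b2 1 0) (cond b2 2 (cond b1 (cond b0 0 1) 1))) (cond b3 (cond b2 (cond b1 2 0) 2) (cond b2 (cond b1 (cond b0 2 0) 2) 2))))) (cond b6 (cond b5 (cond b4 (cond b3 3 (cond b2 (cond b1 (cond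 b0 2 1) (cond b0 2 3)) (cond b1 (cond b0 1 3) 3))) (cond b3 (cond b2 (cond b1 1 0) (cond b1 (cond b0 0 1) 1)) (cond b2 (cond b1 (cond b0 1 0) 1) 1))) (cond b4 (cond b3 (cond b2 1 0) (cond b2 (cond b1 0 (cond b0 1 0)) 0)) (cond b3 (cond b2 0 (cond b1 2 0)) (cond b2 (cond b1 (cond b0 2 0) 2) 2)))) (cond b5 (cond b4 (cond b3 1 0) (cond b3 (cond b2 2 (cond b1 (cond b0 2 1) 2)) (cond b2 (cond b1 0 (cond b0 1 0)) 1))) (cond b4 (cond b3 (cond b2 1 0) (cond b2 2 (cond b1 (cond b0 0 1) 1))) (cond b3 (cond b2 (cond b1 2 0) 2) (cond b2 (cond b1 (cond b0 2 0) 2) 2)))))) (cond b7 (cond b6 (cond b5 (cond b4 (cond b3 3 (cond b2 (cond b1 (cond b0 3 1) (cond b0 2 3)) (cond b1 (cond b0 1 3) 3))) (cond b3 (cond b2 1 (cond b1 (cond b0 1 2) 3)) (cond b2 (cond b1 1 (cond b0 3 1)) 3))) (cond b4 (cond b3 (cond b2 1 0) (cond b2 0 (cond b1 (cond b0 0 1)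 1))) (cond b3 (cond b2 (cond b1 1 0) 1) (cond b2 (cond b1 (cond b0 1 0) 1) 1)))) (cond b5 (cond b4 (cond b3 2 0) (cond b3 (cond b2 0 (cond b1 (cond b0 0 1) 0)) (cond b2 (cond b1 (cond b0 1 0) 1) 1))) (cond b4 (cond b3 (cond b2 1 0) (cond b2 2 (cond b1 (cond b0 0 1) 1))) (cond b3 (cond b2 (cond b1 2 0) 2) (cond b2 (cond b1 (cond b0 2 0) 2) 2))))) (cond b6 (cond b5 (cond b4 (cond b3 2 (cond b2 (cond b1 (cond b0 2 0) (cond b0 1 2)) (cond b1 (cond b0 0 2) 2))) (cond b3 (cond b2 (cond b1 1 0) (cond b1 (cond b0 0 1) 1)) (cond b2 (cond b1 (cond b0 1 0) 1) 1))) (cond b4 (cond b3 (cond b2 2 1) (cond b2 (cond b0 1 0) 1)) (cond b3 (cond b2 0 (cond b1 2 0)) (cond b2 (cond b1 (cond b0 2 0) 2) 2)))) (cond b5 (cond b4 (cond b3 1 0) (cond b3 (cond b2 2 (cond b1 (cond b0 2 1) 2)) (cond b2 (cond b1 0 (cond b0 1 0)) 1))) (cond b4 (cond b3 (cond b2 1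 0) (cond b2 2 (cond b1 (cond b0 0 1) 1))) (cond b3 (cond b2 (cond b1 2 0) 2) (cond b2 (cond b1 (cond b0 2 0) 2) 2))))))) (cond b8 (cond b7 (cond b6 (cond b5 (cond b4 (cond b3 2 (cond b2 (cond b1 (cond b0 2 0) (cond b0 1 2)) (cond b1 (cond b0 0 2) 2))) (cond b3 (cond b2 (cond b1 2 0) (cond b1 (cond b0 0 1) 2)) (cond b2 (cond b1 0 (cond b0 2 0)) 2))) (cond b4 (cond b3 (cond b2 1 0) (cond b2 (cond b1 0 (cond b0 1 0)) (cond b1 (cond b0 0 2) 2))) (cond b3 (cond b2 0 (cond b1 2 0)) (cond b2 (cond b1 (cond b0 2 0) 2) 2)))) (cond b5 (cond b4 (cond b3 (cond b2 2 (cond b1 (cond b0 1 2) 2)) 0) (cond b3 0 (cond b2 (cond b1 0 (cond b0 2 0)) (cond b1 (cond b0 1 2) 2)))) (cond b4 (cond b3 (cond b2 1 0) (cond b2 2 (cond b1 (cond b0 0 1) 1))) (cond b3 (cond b2 (cond b1 2 0) 2) (cond b2 (cond b1 (cond b0 2 0) 2) 2))))) (cond b6 (cond b5 (cond b4 (cond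 b3 3 (cond b2 (cond b1 (cond b0 2 1) (cond b0 2 3)) (cond b1 (cond b0 1 3) 3))) (cond b3 (cond b2 (cond b1 1 0) (cond b1 (cond b0 0 1) 1)) (cond b2 (cond b1 (cond b0 1 0) 1) 1))) (cond b4 (cond b3 (cond b2 1 0) (cond b2 (cond b1 0 (cond b0 1 0)) 0)) (cond b3 (cond b2 (cond b1 1 0) 1) (cond b2 (cond b1 (cond b0 1 0) 1) 1)))) (cond b5 (cond b4 (cond b3 1 0) (cond b3 (cond b2 2 (cond b1 (cond b0 2 1) 2)) (cond b2 (cond b1 0 (cond b0 1 0)) 1))) (cond b4 (cond b3 (cond b2 1 0) (cond b2 2 (cond b1 (cond b0 0 1) 1))) (cond b3 (cond b2 (cond b1 2 0) 2) (cond b2 (cond b1 (cond b0 2 0) 2) 2)))))) (cond b7 (cond b6 (cond b5 (cond b4 (cond b3 2 (cond b2 (cond b1 (cond b0 2 0) (cond b0 1 2)) (cond b1 (cond b0 0 2) 2))) (cond b3 (cond b2 (cond b1 2 0) (cond b1 (cond b0 0 1) 2)) (cond b2 (cond b1 0 (cond b0 2 0)) 2))) (cond b4 (cond b3 (cond b2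 1 0) (cond b2 0 (cond b1 (cond b0 0 1) 1))) (cond b3 (cond b2 (cond b1 1 0) 1) (cond b2 (cond b1 (cond b0 1 0) 1) 1)))) (cond b5 (cond b4 (cond b3 2 0) (cond b3 (cond b2 0 (cond b1 (cond b0 0 1) 0)) (cond b2 (cond b1 (cond b0 1 0) 1) 1))) (cond b4 (cond b3 (cond b2 1 0) (cond b2 2 (cond b1 (cond b0 0 1) 1))) (cond b3 (cond b2 (cond b1 2 0) 2) (cond b2 (cond b1 (cond b0 2 0) 2) 2))))) (cond b6 (cond b5 (cond b4 (cond b3 2 (cond b2 (cond b1 (cond b0 2 0) (cond b0 1 2)) (cond b1 (cond b0 0 2) 2))) (cond b3 (cond b2 (cond b1 1 0) (cond b1 (cond b0 0 1) 1)) (cond b2 (cond b1 (cond b0 1 0) 1) 1))) (cond b4 (cond b3 (cond b2 2 1) (cond b2 (cond b0 1 0) 1)) (cond b3 (cond b2 0 (cond b1 2 0)) (cond b2 (cond b1 (cond b0 2 0) 2) 2)))) (cond b5 (cond b4 (cond b3 1 0) (cond b3 (cond b2 2 (cond b1 (cond b0 2 1) 2)) (cond b2 (cond b1 0 (cond b0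 1 0)) 1))) (cond b4 (cond b3 (cond b2 1 0) (cond b2 2 (cond b1 (cond b0 0 1) 1))) (cond b3 (cond b2 (cond b1 2 0) 2) (cond b2 (cond b1 (cond b0 2 0) 2) 2))))))))

def core (b0 b1 b2 b3 b4 b5 b6 b7 b8 b9 b10 b11 b12 b13 b14 : Bool) : Bool :=
  let f4 := bfo9 b0 b1 b2 b3 b4 b5 b6 b7 b8
  let f5 := bfo9 b1 b2 b3 b4 b5 b6 b7 b8 b9
  let f6 := bfo9 b2 b3 b4 b5 b6 b7 b8 b9 b10
  let f7 := bfo9 b3 b4 b5 b6 b7 b8 b9 b10 b11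
  let f8 := bfo9 b4 b5 b6 b7 b8 b9 b10 b11 b12
  let f9 := bfo9 b5 b6 b7 b8 b9 b10 b11 b12 b13
  let f10 := bfo9 b6 b7 b8 b9 b10 b11 b12 b13 b14
  Nat.ble ((switch7 f4 f5 f6 f7 f8 f9 f10).toNat
      + (!b0 && !b1 && b2 && !b3 && b4 && !b5 && b6).toNat
      + PHI b0 b1 b2 b3 b4 b5 b6 b7 b8 b9)
    ((switch7 b4 b5 b6 b7 b8 b9 b10).toNat + PHI b1 b2 b3 b4 b5 b6 b7 b8 b9 b10)

def A2 (f : Bool → Bool) : Bool := f true && f false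

set_option maxHeartbeats 16000000 in
theorem all_core : (A2 fun b0 => A2 fun b1 => A2 fun b2 => A2 fun b3 => A2 fun b4 => A2 fun b5 => A2 fun b6 => A2 fun b7 => A2 fun b8 => A2 fun b9 => A2 fun b10 => A2 fun b11 => A2 fun b12 => A2 fun b13 => A2 fun b14 => core b0 b1 b2 b3 b4 b5 b6 b7 b8 b9 b10 b11 b12 b13 b14) = true := by decide

theorem A2_true {f : Bool → Bool} (h : A2 f = true) (b : Bool) : f b = true := by
  have h1 := Bool.and_elim_left h
  have h2 := Bool.and_elim_right h
  cases b
  · exact h2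
  · exact h1

theorem core_true (b0 b1 b2 b3 b4 b5 b6 b7 b8 b9 b10 b11 b12 b13 b14 : Bool) :
    core b0 b1 b2 b3 b4 b5 b6 b7 b8 b9 b10 b11 b12 b13 b14 = true := by
  have h := all_core
  replace h := A2_true h b0
  replace h := A2_true h b1
  replace h := A2_true h b2
  replace h := A2_true h b3
  replace h := A2_true h b4
  replace h := A2_true h b5
  replace h := A2_true h b6
  replace h := A2_true h b7
  replace h := A2_true h b8
  replace h := A2_true h b9
  replace h := A2_true h b10
  replace h := A2_true h b11
  replace h := A2_true h b12
  replace h := A2_true h b13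
  replace h := A2_true h b14
  exact h

theorem switch7_spec : ∀ a b c d e f g : Bool,
    switch7 a b c d e f g = true ↔
      (box3 c d e f g = true ∨ (c ≠ d ∧ ¬(box3 b c d e f = true ∨ box3 a b c d e = true)
        ∧ ¬(box3 c d e f g = true ∨ box3 b c d e f = true))) := by decide

theorem b2n (b : Bool) (P : Prop) [Decidable P] (h : b = true ↔ P) :
    b.toNat = if P then 1 else 0 := by
  by_cases hp : P
  · simp [hp, h.mpr hp]
  · have : b = false := by cases b; rfl; exact absurd (h.mp rfl) hp
    simp [hp, this]

variable {n : ℕ}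

theorem isBox_iff (y : ZMod n → Bool) (p : ZMod n) :
    IsBox y p ↔ box3 (y (p-1)) (y p) (y (p+1)) (y (p+2)) (y (p+3)) = true := by
  simp [IsBox, box3, and_assoc, Bool.not_eq_true']

theorem inBox_iff (y : ZMod n → Bool) (j : ZMod n) :
    InBox y j ↔ IsBox y j ∨ IsBox y (j-1) := by
  constructor
  · rintro ⟨p, hb, (rfl | rfl)⟩
    · exact Or.inl hb
    · right; simpa using hb
  · rintro (hb | hb)
    · exact ⟨j, hb, Or.inl rfl⟩
    · exact ⟨j-1, hb, Or.inr (by ring)⟩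

theorem isSwitch_iff (y : ZMod n → Bool) (i : ZMod n) :
    IsSwitch y i ↔
      switch7 (y (i-2)) (y (i-1)) (y i) (y (i+1)) (y (i+2)) (y (i+3)) (y (i+4)) = true := by
  rw [switch7_spec]
  simp only [IsSwitch, inBox_iff]
  simp only [show (i:ZMod n)+1-1 = i from by ring]
  simp only [isBox_iff]
  simp only [show (i:ZMod n)+1-1 = i from by ring, show (i+1+1 : ZMod n) = i+2 from by ring, show (i+1+2 : ZMod n) = i+3 from by ring, show (i+1+3 : ZMod n) = i+4 from by ring, show (i-1-1 : ZMod n) = i-2 from by ring, show (i-1+1 : ZMod n) = i from by ring, show (i-1+2 : ZMod n) = i+1 from by ring, show (i-1+3 : ZMod n) = i+2 from by ring]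

theorem F_eq (x : ZMod n → Bool) (u : ZMod n) :
    bfoGlobal x u = bfo9 (x (u-4)) (x (u-3)) (x (u-2)) (x (u-1)) (x u)
      (x (u+1)) (x (u+2)) (x (u+3)) (x (u+4)) := by
  show bfoLocal _ = _
  rw [bfoLocal, bfo9, bfoActive]
  simp only [show (((0:Fin 9)):ℕ) = 0 from rfl, show (((1:Fin 9)):ℕ) = 1 from rfl, show (((2:Fin 9)):ℕ) = 2 from rfl, show (((3:Fin 9)):ℕ) = 3 from rfl, show (((4:Fin 9)):ℕ) = 4 from rfl, show (((5:Fin 9)):ℕ) = 5 from rfl, show (((6:Fin 9)):ℕ) = 6 from rfl, show (((7:Fin 9)):ℕ) = 7 from rfl, show (((8:Fin 9)):ℕ) = 8 from rfl,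
    Nat.cast_ofNat, Nat.cast_zero, Nat.cast_one]
  ring_nf

def M (x : ZMod n → Bool) (i : ZMod n) : Bool :=
  !(x (i-6)) && !(x (i-5)) && x (i-4) && !(x (i-3)) && x (i-2) && !(x (i-1)) && x i

def H (x : ZMod n → Bool) (i : ZMod n) : ℕ :=
  PHI (x (i-6)) (x (i-5)) (x (i-4)) (x (i-3)) (x (i-2)) (x (i-1)) (x i) (x (i+1)) (x (i+2)) (x (i+3))

theorem key_i (x : ZMod n → Bool) (i : ZMod n)
    [Decidable (IsSwitch (bfoGlobal x) i)] [Decidable (IsSwitch x i)] :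
    (if IsSwitch (bfoGlobal x) i then 1 else 0) + (M x i).toNat + H x i
      ≤ (if IsSwitch x i then 1 else 0) + H x (i+1) := by
  have h := core_true (x (i-6)) (x (i-5)) (x (i-4)) (x (i-3)) (x (i-2)) (x (i-1)) (x i)
    (x (i+1)) (x (i+2)) (x (i+3)) (x (i+4)) (x (i+5)) (x (i+6)) (x (i+7)) (x (i+8))
  simp only [core] at h
  replace h := Nat.le_of_ble_eq_true h
  have g0 : bfoGlobal x (i-2) = bfo9 (x (i-6)) (x (i-5)) (x (i-4)) (x (i-3)) (x (i-2)) (x (i-1)) (x i) (x (i+1)) (x (i+2)) := by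
    rw [F_eq]
    simp only [show (i-2-4 : ZMod n) = i-6 from by ring, show (i-2-3 : ZMod n) = i-5 from by ring, show (i-2-2 : ZMod n) = i-4 from by ring, show (i-2-1 : ZMod n) = i-3 from by ring, show (i-2+1 : ZMod n) = i-1 from by ring, show (i-2+2 : ZMod n) = i from by ring, show (i-2+3 : ZMod n) = i+1 from by ring, show (i-2+4 : ZMod n) = i+2 from by ring]
  have g1 : bfoGlobal x (i-1) = bfo9 (x (i-5)) (x (i-4)) (x (i-3)) (x (i-2)) (x (i-1)) (x i) (x (i+1)) (x (i+2)) (x (i+3)) := by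
    rw [F_eq]
    simp only [show (i-1-4 : ZMod n) = i-5 from by ring, show (i-1-3 : ZMod n) = i-4 from by ring, show (i-1-2 : ZMod n) = i-3 from by ring, show (i-1-1 : ZMod n) = i-2 from by ring, show (i-1+1 : ZMod n) = i from by ring, show (i-1+2 : ZMod n) = i+1 from by ring, show (i-1+3 : ZMod n) = i+2 from by ring, show (i-1+4 : ZMod n) = i+3 from by ring]
  have g2 : bfoGlobal x i = bfo9 (x (i-4)) (x (i-3)) (x (i-2)) (x (i-1)) (x i) (x (i+1)) (x (i+2)) (x (i+3)) (x (i+4)) := by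
    rw [F_eq]
  have g3 : bfoGlobal x (i+1) = bfo9 (x (i-3)) (x (i-2)) (x (i-1)) (x i) (x (i+1)) (x (i+2)) (x (i+3)) (x (i+4)) (x (i+5)) := by
    rw [F_eq]
    simp only [show (i+1-4 : ZMod n) = i-3 from by ring, show (i+1-3 : ZMod n) = i-2 from by ring, show (i+1-2 : ZMod n) = i-1 from by ring, show (i+1-1 : ZMod n) = i from by ring, show (i+1+1 : ZMod n) = i+2 from by ring, show (i+1+2 : ZMod n) = i+3 from by ring, show (i+1+3 : ZMod n) = i+4 from by ring, show (i+1+4 : ZMod n) = i+5 from by ring]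
  have g4 : bfoGlobal x (i+2) = bfo9 (x (i-2)) (x (i-1)) (x i) (x (i+1)) (x (i+2)) (x (i+3)) (x (i+4)) (x (i+5)) (x (i+6)) := by
    rw [F_eq]
    simp only [show (i+2-4 : ZMod n) = i-2 from by ring, show (i+2-3 : ZMod n) = i-1 from by ring, show (i+2-2 : ZMod n) = i from by ring, show (i+2-1 : ZMod n) = i+1 from by ring, show (i+2+1 : ZMod n) = i+3 from by ring, show (i+2+2 : ZMod n) = i+4 from by ring, show (i+2+3 : ZMod n) = i+5 from by ring, show (i+2+4 : ZMod n) = i+6 from by ring]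
  have g5 : bfoGlobal x (i+3) = bfo9 (x (i-1)) (x i) (x (i+1)) (x (i+2)) (x (i+3)) (x (i+4)) (x (i+5)) (x (i+6)) (x (i+7)) := by
    rw [F_eq]
    simp only [show (i+3-4 : ZMod n) = i-1 from by ring, show (i+3-3 : ZMod n) = i from by ring, show (i+3-2 : ZMod n) = i+1 from by ring, show (i+3-1 : ZMod n) = i+2 from by ring, show (i+3+1 : ZMod n) = i+4 from by ring, show (i+3+2 : ZMod n) = i+5 from by ring, show (i+3+3 : ZMod n) = i+6 from by ring, show (i+3+4 : ZMod n) = i+7 from by ring]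
  have g6 : bfoGlobal x (i+4) = bfo9 (x i) (x (i+1)) (x (i+2)) (x (i+3)) (x (i+4)) (x (i+5)) (x (i+6)) (x (i+7)) (x (i+8)) := by
    rw [F_eq]
    simp only [show (i+4-4 : ZMod n) = i from by ring, show (i+4-3 : ZMod n) = i+1 from by ring, show (i+4-2 : ZMod n) = i+2 from by ring, show (i+4-1 : ZMod n) = i+3 from by ring, show (i+4+1 : ZMod n) = i+5 from by ring, show (i+4+2 : ZMod n) = i+6 from by ring, show (i+4+3 : ZMod n) = i+7 from by ring, show (i+4+4 : ZMod n) = i+8 from by ring]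
  rw [← g0, ← g1, ← g2, ← g3, ← g4, ← g5, ← g6] at h
  rw [b2n _ _ (isSwitch_iff (bfoGlobal x) i).symm, b2n _ _ (isSwitch_iff x i).symm] at h
  simp only [M, H]
  simp only [show (i+1-6 : ZMod n) = i-5 from by ring, show (i+1-5 : ZMod n) = i-4 from by ring, show (i+1-4 : ZMod n) = i-3 from by ring, show (i+1-3 : ZMod n) = i-2 from by ring, show (i+1-2 : ZMod n) = i-1 from by ring, show (i+1-1 : ZMod n) = i from by ring, show (i+1 : ZMod n) = i+1 from by ring, show (i+1+1 : ZMod n) = i+2 from by ring, show (i+1+2 : ZMod n) = i+3 from by ring, show (i+1+3 : ZMod n) = i+4 from by ring]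
  exact h

end BfoCert

open BfoCert in
/-- If `x` contains the block `0010101` (the domain `D_{7,8}^r`),
then the switch count strictly decreases in one step of the corrected BFO rule. -/
theorem bfo_switchCount_decreases_D78r (n : ℕ) (hn : Odd n)
    (x : ZMod n → Bool) (i : ZMod n)
    (h : ContainsAt x i [false, false, true, false, true, false, true]) :
    switchCount (bfoGlobal x) < switchCount x := by
  haveI : NeZero n := ⟨by rcases hn with ⟨k, rfl⟩; omega⟩
  classical
  have hcount : ∀ y : ZMod n → Bool,
      switchCount y = ∑ j : ZMod n, if IsSwitch y j then 1 else 0 := by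
    intro y
    rw [switchCount, Nat.card_eq_fintype_card, Fintype.card_subtype, Finset.card_filter]
  have hkey : ∀ j : ZMod n,
      (if IsSwitch (bfoGlobal x) j then 1 else 0) + (M x j).toNat + H x j
        ≤ (if IsSwitch x j then 1 else 0) + H x (j+1) := fun j => key_i x j
  have hsum := Finset.sum_le_sum (fun j (_ : j ∈ Finset.univ) => hkey j)
  rw [Finset.sum_add_distrib, Finset.sum_add_distrib, Finset.sum_add_distrib] at hsum
  have hshift : ∑ j : ZMod n, H x (j+1) = ∑ j : ZMod n, H x j :=
    Fintype.sum_equiv (Equiv.addRight (1 : ZMod n)) _ _ (fun j => rfl)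
  rw [hshift] at hsum
  have h0 : x i = false := by simpa using h ⟨0, by norm_num⟩
  have h1 : x (i+1) = false := by simpa using h ⟨1, by norm_num⟩
  have h2 : x (i+2) = true := by simpa using h ⟨2, by norm_num⟩
  have h3 : x (i+3) = false := by simpa using h ⟨3, by norm_num⟩
  have h4 : x (i+4) = true := by simpa using h ⟨4, by norm_num⟩
  have h5 : x (i+5) = false := by simpa using h ⟨5, by norm_num⟩
  have h6 : x (i+6) = true := by simpa using h ⟨6, by norm_num⟩
  have hMval : M x (i+6) = true := by
    simp only [M, show (i+6-6 : ZMod n) = i from by ring, show (i+6-5 : ZMod n) = i+1 from by ring, show (i+6-4 : ZMod n) = i+2 from by ring, show (i+6-3 : ZMod n) = i+3 from by ring, show (i+6-2 : ZMod n) = i+4 from by ring, show (i+6-1 : ZMod n) = i+5 from by ring]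
    rw [h0, h1, h2, h3, h4, h5, h6]
    rfl
  have hM : 1 ≤ ∑ j : ZMod n, (M x j).toNat := by
    calc (1:ℕ) = (M x (i+6)).toNat := by rw [hMval]; rfl
    _ ≤ ∑ j : ZMod n, (M x j).toNat :=
        Finset.single_le_sum (f := fun j => (M x j).toNat)
          (fun _ _ => Nat.zero_le _) (Finset.mem_univ _)
  rw [hcount x, hcount (bfoGlobal x)]
  omega
end

section
/- No cyclic configuration of odd length on which the corrected BFO rule keeps the switch count constant forever can contain the block 010101. -/
/-! ### Auxiliary machinery for the proof -/

section Aux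
open Finset

/-- Explicit 9-argument form of the BFO local rule. -/
def bfoE (w0 w1 w2 w3 w4 w5 w6 w7 w8 : Bool) : Bool :=
  xor ((w1 && w2 && w3 && !w4 && !w5) || (w0 && w1 && w2 && !w3 && !w4) ||
    (!w1 && !w2 && w3 && !w4 && !w5) || (!w0 && !w1 && w2 && !w3 && !w4) ||
    (!w3 && w4 && w5 && !w6) || (!w2 && w3 && w4 && !w5) ||
    (!w1 && !w2 && w3 && !w4 && w5 && !w6) || (!w2 && !w3 && w4 && !w5 && w6 && !w7) ||
    (w3 && w4 && w5 && !w6 && w7) || (w0 && w1 && w2 && !w3 && w4 && !w5) ||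
    (w0 && w1 && w2 && !w3 && w4 && w5 && w6) || (w2 && w3 && w4 && !w5 && w6 && w7 && !w8)) w4

def bX (p q r s t : Bool) : Bool := p && !q && r && !s && !t

def qb (a0 a1 a2 a3 a4 a5 a6 a7 : Bool) : Bool :=
  (!a0 && !a1 && a2 && !a3 && a4 && !a5 && a6 && a7) ||
  (a0 && !a1 && a2 && !a3 && a4 && !a5 && a6 && a7) ||
  (!a0 && a1 && !a2 && a3 && !a4 && a5 && !a6 && !a7)

def hTab : ℕ := 7271630506580206988368727797462604944229374782380775556311009350620453997573187207388426104597998308490444356070181375190014594730258929718824980210143905857513814552287166800395795055022014058095001157869315272508735170594370169442427456108764073679695682480809204137605072126860151751495255174167790692264265502496392776327692283657694049874079764259531556566441549873889076455634782792500820980811328710912720588516480980548528002142651490203241644352117363338882771905158085031559578796566358464654044213623611118124614100913223248013390104167910397048647054596268291906718801431685821332584022767642025902922085989993586342655178417498428391115172234703855852893181599710151212294332143531690547631732362976423362817665044867056629590059132425977856375741486403672801420498107617685314710933676839183389175652873229253547067706429545146274714530260393027102470767131676841223917169590206041464062935259942456086895355826735414596438598746372804813300765107191336124123589300280557681997926732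88601158123200893338557509298014736516134659948264206961592279452371835578024135487943485014843639689081853318185009588893460283998085820617382863365863469154032180180878807861435722031184313484376040094538735089050284655509196293502913589131261924172054521832102096165104816330534783651539333229472521861508903456085731005750398112209628422958591697815789801530838270992888109010224697547891823928681715503364252831425507159558471076878971403567075183047938003777574575405885374763121315263034180900801187324218943627875065813578609420628038327297219098542948662071754029799939501977799951542533582163930825168521316808672949970711334072745336013210555487175165659646373652221280052368877071379098474552258678791614090863661297009654483140438527040237603344413448340222422699239753590498113847631248740308877521545069716059350505645482502219639102659761386978671187390275192198908242222334288927597308595725854591168208987147193879382929459382332853023109344573251576131177957570810692599987835987070086825555625745798585143792485414492693014646052897531847418250539036151833341501635167450407066933515480863547215275608204893663863371049442751750920182191635552577222427038261662224648840061590377817951208123014455905546599814200839945881460446018289769249920646679515875651309518453362159174694803555258482448906458193736402450111323092677958733360570755541879497981067413922087261004516216373479022826652503594034544338477011326578060238272008380562785869081447082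

def hV (a0 a1 a2 a3 a4 a5 a6 a7 a8 a9 a10 a11 : Bool) : ℕ :=
  (hTab >>> (2 * ((a0).toNat + 2 * (a1).toNat + 4 * (a2).toNat + 8 * (a3).toNat + 16 * (a4).toNat + 32 * (a5).toNat + 64 * (a6).toNat + 128 * (a7).toNat + 256 * (a8).toNat + 512 * (a9).toNat + 1024 * (a10).toNat + 2048 * (a11).toNat))) % 4

def cN (a0 : Bool) (a1 : Bool) (a2 : Bool) (a3 : Bool) (a4 : Bool) (a5 : Bool) (a6 : Bool) (a7 : Bool) (a8 : Bool) (a9 : Bool) (a10 : Bool) (a11 : Bool) (a12 : Bool) : ℕ :=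
  (cond (a5 != a6) 1 0) + (cond (bX (bfoE a0 a1 a2 a3 a4 a5 a6 a7 a8) (bfoE a1 a2 a3 a4 a5 a6 a7 a8 a9) (bfoE a2 a3 a4 a5 a6 a7 a8 a9 a10) (bfoE a3 a4 a5 a6 a7 a8 a9 a10 a11) (bfoE a4 a5 a6 a7 a8 a9 a10 a11 a12)) 2 0) + 4
    - (cond (bX a4 a5 a6 a7 a8) 2 0) - (cond ((bfoE a1 a2 a3 a4 a5 a6 a7 a8 a9) != (bfoE a2 a3 a4 a5 a6 a7 a8 a9 a10)) 1 0)

set_option maxRecDepth 100000 in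
theorem cert : ∀ (a0 : Bool) (a1 : Bool) (a2 : Bool) (a3 : Bool) (a4 : Bool) (a5 : Bool) (a6 : Bool) (a7 : Bool) (a8 : Bool) (a9 : Bool) (a10 : Bool) (a11 : Bool) (a12 : Bool),
    (cond (qb a0 a1 a2 a3 a4 a5 a6 a7) 1 0) + hV a0 a1 a2 a3 a4 a5 a6 a7 a8 a9 a10 a11 + 4 ≤ cN a0 a1 a2 a3 a4 a5 a6 a7 a8 a9 a10 a11 a12 + hV a1 a2 a3 a4 a5 a6 a7 a8 a9 a10 a11 a12 := by
  decide

lemma condArith : ∀ b1 b2 b3 b4 : Bool,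
    cond b1 (1:ℤ) 0 - 2 * cond b2 1 0 - cond b3 1 0 + 2 * cond b4 1 0 =
      ((cond b1 1 0 + cond b4 2 0 + 4 - cond b2 2 0 - cond b3 1 0 : ℕ) : ℤ) - 4 := by
  decide

variable {n : ℕ}

lemma bfoGlobal_eq (x : ZMod n → Bool) (i : ZMod n) :
    bfoGlobal x i = bfoE (x (i-4)) (x (i-3)) (x (i-2)) (x (i-1)) (x i)
      (x (i+1)) (x (i+2)) (x (i+3)) (x (i+4)) := by
  have base : bfoGlobal x i = bfoE
      (x (i + ((0:ℕ):ZMod n) - ((4:ℕ):ZMod n))) (x (i + ((1:ℕ):ZMod n) - ((4:ℕ):ZMod n)))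
      (x (i + ((2:ℕ):ZMod n) - ((4:ℕ):ZMod n))) (x (i + ((3:ℕ):ZMod n) - ((4:ℕ):ZMod n)))
      (x (i + ((4:ℕ):ZMod n) - ((4:ℕ):ZMod n))) (x (i + ((5:ℕ):ZMod n) - ((4:ℕ):ZMod n)))
      (x (i + ((6:ℕ):ZMod n) - ((4:ℕ):ZMod n))) (x (i + ((7:ℕ):ZMod n) - ((4:ℕ):ZMod n)))
      (x (i + ((8:ℕ):ZMod n) - ((4:ℕ):ZMod n))) := rfl
  rw [base]
  congr 1 <;> · congr 1; push_cast; ring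

def bdZ (y : ZMod n → Bool) (i : ZMod n) : ℤ := cond (y i != y (i+1)) 1 0

def bxZ (y : ZMod n → Bool) (i : ZMod n) : ℤ :=
  cond (bX (y (i-1)) (y i) (y (i+1)) (y (i+2)) (y (i+3))) 1 0

def siteC (x : ZMod n → Bool) (i : ZMod n) : ℤ :=
  bdZ x i - 2 * bxZ x i - bdZ (bfoGlobal x) i + 2 * bxZ (bfoGlobal x) i

lemma site_eq (x : ZMod n → Bool) (i : ZMod n) :
    siteC x i = (cN (x (i - 5)) (x (i - 4)) (x (i - 3)) (x (i - 2)) (x (i - 1)) (x i) (x (i + 1)) (x (i + 2)) (x (i + 3)) (x (i + 4)) (x (i + 5)) (x (i + 6)) (x (i + 7)) : ℤ) - 4 := by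
  simp only [siteC, bdZ, bxZ, cN]
  rw [bfoGlobal_eq x (i-1), bfoGlobal_eq x i, bfoGlobal_eq x (i+1),
    bfoGlobal_eq x (i+2), bfoGlobal_eq x (i+3)]
  rw [(show i - 1 - 4 = i - 5 from by ring),
    (show i - 1 - 3 = i - 4 from by ring),
    (show i - 1 - 2 = i - 3 from by ring),
    (show i - 1 - 1 = i - 2 from by ring),
    (show i - 1 + 1 = i from by ring),
    (show i - 1 + 2 = i + 1 from by ring),
    (show i - 1 + 3 = i + 2 from by ring),
    (show i - 1 + 4 = i + 3 from by ring),
    (show i + 1 - 4 = i - 3 from by ring),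
    (show i + 1 - 3 = i - 2 from by ring),
    (show i + 1 - 2 = i - 1 from by ring),
    (show i + 1 - 1 = i from by ring),
    (show i + 1 + 1 = i + 2 from by ring),
    (show i + 1 + 2 = i + 3 from by ring),
    (show i + 1 + 3 = i + 4 from by ring),
    (show i + 1 + 4 = i + 5 from by ring),
    (show i + 2 - 4 = i - 2 from by ring),
    (show i + 2 - 3 = i - 1 from by ring),
    (show i + 2 - 2 = i from by ring),
    (show i + 2 - 1 = i + 1 from by ring),
    (show i + 2 + 1 = i + 3 from by ring),
    (show i + 2 + 2 = i + 4 from by ring),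
    (show i + 2 + 3 = i + 5 from by ring),
    (show i + 2 + 4 = i + 6 from by ring),
    (show i + 3 - 4 = i - 1 from by ring),
    (show i + 3 - 3 = i from by ring),
    (show i + 3 - 2 = i + 1 from by ring),
    (show i + 3 - 1 = i + 2 from by ring),
    (show i + 3 + 1 = i + 4 from by ring),
    (show i + 3 + 2 = i + 5 from by ring),
    (show i + 3 + 3 = i + 6 from by ring),
    (show i + 3 + 4 = i + 7 from by ring)]
  exact condArith _ _ _ _

lemma isBox_iff (x : ZMod n → Bool) (i : ZMod n) :
    IsBox x i ↔ bX (x (i-1)) (x i) (x (i+1)) (x (i+2)) (x (i+3)) = true := by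
  simp [IsBox, bX, Bool.and_eq_true, Bool.not_eq_true', and_assoc]

instance (x : ZMod n → Bool) (i : ZMod n) : Decidable (IsBox x i) := by
  unfold IsBox; exact inferInstance

instance [NeZero n] (x : ZMod n → Bool) (j : ZMod n) : Decidable (InBox x j) := by
  unfold InBox; exact inferInstance

instance [NeZero n] (x : ZMod n → Bool) (i : ZMod n) : Decidable (IsSwitch x i) := by
  unfold IsSwitch; exact inferInstance

variable (x : ZMod n → Bool)

lemma box_one_ne {i : ZMod n} (h : IsBox x i) : (1 : ZMod n) ≠ 0 := by
  intro h1
  have e : i + 1 = i := by rw [h1, add_zero]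
  have h2 := h.2.1
  have h3 := h.2.2.1
  rw [e, h2] at h3
  exact absurd h3 (by simp)

lemma box_two_ne {i : ZMod n} (h : IsBox x i) : (2 : ZMod n) ≠ 0 := by
  intro h2
  have e : i + 3 = i + 1 := by
    have e' : i + 3 = i + 1 + 2 := by ring
    rw [e', h2, add_zero]
  have h3 := h.2.2.2.2
  have h4 := h.2.2.1
  rw [← e] at h4
  rw [h4] at h3
  exact absurd h3 (by simp)

lemma box_not_succ {i : ZMod n} (h : IsBox x i) (h' : IsBox x (i+1)) : False := by
  have a := h.2.1
  have b := h'.1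
  rw [show i+1-1 = i from by ring, a] at b
  exact absurd b (by simp)

lemma box_not_succ2 {i : ZMod n} (h : IsBox x i) (h' : IsBox x (i+2)) : False := by
  have a := h.2.2.2.2
  have b := h'.2.2.1
  rw [show i+2+1 = i+3 from by ring, a] at b
  exact absurd b (by simp)

lemma box_triple_card {i : ZMod n} (h : IsBox x i) :
    ({i-1, i, i+1} : Finset (ZMod n)).card = 3 := by
  have h1 := box_one_ne x h
  have h2 := box_two_ne x h
  rw [Finset.card_insert_of_notMem, Finset.card_insert_of_notMem, Finset.card_singleton]
  · simp only [Finset.mem_singleton]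
    intro e
    exact h1 (left_eq_add.mp e)
  · simp only [Finset.mem_insert, Finset.mem_singleton]
    rintro (e | e)
    · exact h1 (sub_eq_self.mp e)
    · rw [sub_eq_iff_eq_add, add_assoc] at e
      have e2 := left_eq_add.mp e
      rw [one_add_one_eq_two] at e2
      exact h2 e2

lemma box_triple_disjoint {i j : ZMod n} (hi : IsBox x i) (hj : IsBox x j) (hne : i ≠ j) :
    Disjoint ({i-1, i, i+1} : Finset (ZMod n)) {j-1, j, j+1} := by
  have F1 : i ≠ j + 1 := fun h => box_not_succ x hj (h ▸ hi)
  have F2 : i ≠ j + 2 := fun h => box_not_succ2 x hj (h ▸ hi)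
  have F3 : j ≠ i + 1 := fun h => box_not_succ x hi (h ▸ hj)
  have F4 : j ≠ i + 2 := fun h => box_not_succ2 x hi (h ▸ hj)
  simp only [Finset.disjoint_left, Finset.mem_insert, Finset.mem_singleton]
  intro a ha hb
  rcases ha with ha | ha | ha <;> rcases hb with hb | hb | hb
  · exact hne (sub_left_inj.mp (ha.symm.trans hb))
  · exact F1 (by rw [← (ha.symm.trans hb)]; ring)
  · exact F2 (by rw [sub_eq_iff_eq_add.mp (ha.symm.trans hb)]; ring)
  · exact F3 (by rw [ha.symm.trans hb]; ring)
  · exact hne (ha.symm.trans hb)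
  · exact F1 (ha.symm.trans hb)
  · exact F4 (by rw [sub_eq_iff_eq_add.mp (ha.symm.trans hb).symm]; ring)
  · exact F3 (hb.symm.trans ha)
  · exact hne (add_right_cancel (ha.symm.trans hb))

lemma switchCount_eq [NeZero n] : switchCount x = (univ.filter fun i => IsSwitch x i).card := by
  rw [switchCount, Nat.card_eq_fintype_card, Fintype.card_subtype]

lemma bd_card [NeZero n] :
    (univ.filter fun i => x i ≠ x (i+1)).card
      = (univ.filter fun i => IsSwitch x i).card
        + 2 * (univ.filter fun i => IsBox x i).card := by
  have hTcard : ((univ.filter fun i => IsBox x i).biUnion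
      fun i => ({i-1, i, i+1} : Finset (ZMod n))).card
      = 3 * (univ.filter fun i => IsBox x i).card := by
    rw [Finset.card_biUnion (fun a ha b hb hab =>
      box_triple_disjoint x (Finset.mem_filter.mp ha).2 (Finset.mem_filter.mp hb).2 hab)]
    rw [Finset.sum_congr rfl (fun i hi => box_triple_card x (Finset.mem_filter.mp hi).2)]
    rw [Finset.sum_const, smul_eq_mul, mul_comm]
  have hdecomp : (univ.filter fun i => x i ≠ x (i+1))
      = (univ.filter fun i => x i ≠ x (i+1) ∧ ¬ InBox x i ∧ ¬ InBox x (i+1))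
        ∪ ((univ.filter fun i => IsBox x i).biUnion fun i => {i-1, i, i+1}) := by
    ext a
    simp only [Finset.mem_union, Finset.mem_filter, Finset.mem_biUnion, Finset.mem_insert,
      Finset.mem_singleton, Finset.mem_univ, true_and]
    constructor
    · intro ha
      by_cases hin1 : InBox x a
      · obtain ⟨b, hb, h | h⟩ := hin1
        · exact Or.inr ⟨b, hb, Or.inr (Or.inl h)⟩
        · exact Or.inr ⟨b, hb, Or.inr (Or.inr h)⟩
      by_cases hin2 : InBox x (a+1)
      · obtain ⟨b, hb, h | h⟩ := hin2
        · exact Or.inr ⟨b, hb, Or.inl (by rw [← h]; ring)⟩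
        · exact Or.inr ⟨b, hb, Or.inr (Or.inl (add_right_cancel h))⟩
      · exact Or.inl ⟨ha, hin1, hin2⟩
    · rintro (⟨h, _, _⟩ | ⟨b, hb, rfl | rfl | rfl⟩)
      · exact h
      · rw [show b - 1 + 1 = b from by ring, hb.1, hb.2.1]; simp
      · rw [hb.2.1, hb.2.2.1]; simp
      · rw [show b + 1 + 1 = b + 2 from by ring, hb.2.2.1, hb.2.2.2.1]; simp
  have hdisj : Disjoint
      (univ.filter fun i => x i ≠ x (i+1) ∧ ¬ InBox x i ∧ ¬ InBox x (i+1))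
      ((univ.filter fun i => IsBox x i).biUnion fun i => {i-1, i, i+1}) := by
    simp only [Finset.disjoint_left, Finset.mem_filter, Finset.mem_biUnion, Finset.mem_insert,
      Finset.mem_singleton, Finset.mem_univ, true_and]
    rintro a ⟨_, h1, h2⟩ ⟨b, hb, hab | hab | hab⟩
    · exact h2 ⟨b, hb, Or.inl (by rw [hab]; ring)⟩
    · exact h1 ⟨b, hb, Or.inl hab⟩
    · exact h1 ⟨b, hb, Or.inr hab⟩
  have hswitch : (univ.filter fun i => IsSwitch x i)
      = (univ.filter fun i => IsBox x (i+1))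
        ∪ (univ.filter fun i => x i ≠ x (i+1) ∧ ¬ InBox x i ∧ ¬ InBox x (i+1)) := by
    rw [← Finset.filter_or]
    exact Finset.filter_congr (fun i _ => Iff.rfl)
  have hshift : (univ.filter fun i => IsBox x (i+1)).card
      = (univ.filter fun i => IsBox x i).card := by
    apply Finset.card_nbij' (fun a => a + 1) (fun a => a - 1)
    · intro a ha
      simp only [Finset.mem_coe, Finset.mem_filter, Finset.mem_univ, true_and] at ha ⊢
      exact ha
    · intro a ha
      simp only [Finset.mem_coe, Finset.mem_filter, Finset.mem_univ, true_and] at ha ⊢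
      rw [show a - 1 + 1 = a from by ring]
      exact ha
    · intro a _; ring
    · intro a _; ring
  have hswdisj : Disjoint (univ.filter fun i => IsBox x (i+1))
      (univ.filter fun i => x i ≠ x (i+1) ∧ ¬ InBox x i ∧ ¬ InBox x (i+1)) := by
    simp only [Finset.disjoint_left, Finset.mem_filter, Finset.mem_univ, true_and]
    rintro a hbox ⟨_, _, h2⟩
    exact h2 ⟨a+1, hbox, Or.inl rfl⟩
  rw [hdecomp, Finset.card_union_of_disjoint hdisj, hTcard, hswitch,
    Finset.card_union_of_disjoint hswdisj, hshift]
  omega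

lemma bd_sum [NeZero n] (y : ZMod n → Bool) :
    ((univ.filter fun i => y i ≠ y (i+1)).card : ℤ) = ∑ i, bdZ y i := by
  rw [Finset.card_filter]
  push_cast
  refine Finset.sum_congr rfl fun i _ => ?_
  by_cases h : y i = y (i+1) <;> simp [bdZ, h, Bool.cond_eq_ite, bne_iff_ne]

lemma bx_sum [NeZero n] (y : ZMod n → Bool) :
    ((univ.filter fun i => IsBox y i).card : ℤ) = ∑ i, bxZ y i := by
  rw [Finset.card_filter]
  push_cast
  refine Finset.sum_congr rfl fun i _ => ?_
  simp only [bxZ]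
  by_cases h : IsBox y i
  · rw [if_pos h, (isBox_iff y i).mp h]
    rfl
  · have hb : bX (y (i-1)) (y i) (y (i+1)) (y (i+2)) (y (i+3)) = false := by
      cases hbX : bX (y (i-1)) (y i) (y (i+1)) (y (i+2)) (y (i+3))
      · rfl
      · exact absurd ((isBox_iff y i).mpr hbX) h
    rw [if_neg h, hb]
    rfl

lemma sw_drop [NeZero n] :
    (switchCount x : ℤ) - switchCount (bfoGlobal x) = ∑ i, siteC x i := by
  have key : ∀ y : ZMod n → Bool,
      (switchCount y : ℤ) = (∑ i, bdZ y i) - 2 * ∑ i, bxZ y i := by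
    intro y
    have h1 := bd_card y
    have h2 := switchCount_eq y
    have h3 := bd_sum y
    have h4 := bx_sum y
    have h5 := congrArg (Nat.cast : ℕ → ℤ) h1
    push_cast at h5
    rw [h2]
    push_cast
    linarith [h3, h4, h5]
  rw [key x, key (bfoGlobal x)]
  simp only [siteC]
  rw [Finset.sum_add_distrib, Finset.sum_sub_distrib, Finset.sum_sub_distrib,
    ← Finset.mul_sum, ← Finset.mul_sum]
  ring

lemma telescope [NeZero n] (g : ZMod n → ℤ) : ∑ i, (g i - g (i+1)) = 0 := by
  rw [Finset.sum_sub_distrib]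
  have h : ∑ i : ZMod n, g (i+1) = ∑ i : ZMod n, g i :=
    Fintype.sum_equiv (Equiv.addRight (1 : ZMod n)) _ _ (fun i => rfl)
  rw [h, sub_self]

lemma telescope' [NeZero n] (g : ZMod n → ℤ) : ∑ i, (g (i+1) - g i) = 0 := by
  have h := telescope (n := n) g
  have h2 : ∑ i : ZMod n, (g (i+1) - g i) = -∑ i : ZMod n, (g i - g (i+1)) := by
    rw [← Finset.sum_neg_distrib]
    exact Finset.sum_congr rfl fun i _ => by ring
  rw [h2, h, neg_zero]

lemma site_ineq [NeZero n] (i : ZMod n) :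
    cond (qb (x (i - 5)) (x (i - 4)) (x (i - 3)) (x (i - 2)) (x (i - 1)) (x i) (x (i + 1)) (x (i + 2))) (1:ℤ) 0
      ≤ siteC x i - ((hV (x (i - 5)) (x (i - 4)) (x (i - 3)) (x (i - 2)) (x (i - 1)) (x i) (x (i + 1)) (x (i + 2)) (x (i + 3)) (x (i + 4)) (x (i + 5)) (x (i + 6)) : ℕ) : ℤ)
        + ((hV (x (i - 4)) (x (i - 3)) (x (i - 2)) (x (i - 1)) (x i) (x (i + 1)) (x (i + 2)) (x (i + 3)) (x (i + 4)) (x (i + 5)) (x (i + 6)) (x (i + 7)) : ℕ) : ℤ) := by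
  have h := cert (x (i - 5)) (x (i - 4)) (x (i - 3)) (x (i - 2)) (x (i - 1)) (x i) (x (i + 1)) (x (i + 2)) (x (i + 3)) (x (i + 4)) (x (i + 5)) (x (i + 6)) (x (i + 7))
  rw [site_eq]
  have hq : cond (qb (x (i - 5)) (x (i - 4)) (x (i - 3)) (x (i - 2)) (x (i - 1)) (x i) (x (i + 1)) (x (i + 2))) (1:ℤ) 0
      = ((cond (qb (x (i - 5)) (x (i - 4)) (x (i - 3)) (x (i - 2)) (x (i - 1)) (x i) (x (i + 1)) (x (i + 2))) 1 0 : ℕ) : ℤ) := by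
    cases qb (x (i - 5)) (x (i - 4)) (x (i - 3)) (x (i - 2)) (x (i - 1)) (x i) (x (i + 1)) (x (i + 2)) <;> rfl
  rw [hq]
  zify at h
  linarith

def Hfun (x : ZMod n → Bool) (j : ZMod n) : ℤ := ((hV (x (j - 5)) (x (j - 4)) (x (j - 3)) (x (j - 2)) (x (j - 1)) (x j) (x (j + 1)) (x (j + 2)) (x (j + 3)) (x (j + 4)) (x (j + 5)) (x (j + 6)) : ℕ) : ℤ)

lemma Hfun_succ [NeZero n] (x : ZMod n → Bool) (j : ZMod n) :
    Hfun x (j+1) = ((hV (x (j - 4)) (x (j - 3)) (x (j - 2)) (x (j - 1)) (x j) (x (j + 1)) (x (j + 2)) (x (j + 3)) (x (j + 4)) (x (j + 5)) (x (j + 6)) (x (j + 7)) : ℕ) : ℤ) := by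
  simp only [Hfun]
  rw [(show j + 1 - 5 = j - 4 from by ring),
      (show j + 1 - 4 = j - 3 from by ring),
      (show j + 1 - 3 = j - 2 from by ring),
      (show j + 1 - 2 = j - 1 from by ring),
      (show j + 1 - 1 = j from by ring),
      (show j + 1 + 1 = j + 2 from by ring),
      (show j + 1 + 2 = j + 3 from by ring),
      (show j + 1 + 3 = j + 4 from by ring),
      (show j + 1 + 4 = j + 5 from by ring),
      (show j + 1 + 5 = j + 6 from by ring),
      (show j + 1 + 6 = j + 7 from by ring)]

lemma site_ineq' [NeZero n] (j : ZMod n) :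
    cond (qb (x (j - 5)) (x (j - 4)) (x (j - 3)) (x (j - 2)) (x (j - 1)) (x j) (x (j + 1)) (x (j + 2))) (1:ℤ) 0 ≤ siteC x j + (Hfun x (j+1) - Hfun x j) := by
  have hs := site_ineq x j
  rw [Hfun_succ]
  simp only [Hfun]
  linarith

lemma exists_Q [NeZero n] (hn : Odd n) (i : ZMod n)
    (h0 : x i = false) (h1 : x (i+1) = true) (h2 : x (i+2) = false)
    (h3 : x (i+3) = true) (h4 : x (i+4) = false) (h5 : x (i+5) = true) :
    ∃ p : ZMod n, qb (x p) (x (p + 1)) (x (p + 2)) (x (p + 3)) (x (p + 4)) (x (p + 5)) (x (p + 6)) (x (p + 7)) = true := by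
  classical
  have hbreak : ∃ m : ZMod n, x m = x (m+1) := by
    by_contra hcon
    push_neg at hcon
    have key : ∀ k : ℕ, x (i + (k : ZMod n)) = decide (k % 2 = 1) := by
      intro k
      induction k with
      | zero => simpa using h0
      | succ k ih =>
        have hne := hcon (i + (k : ZMod n))
        have hflip : x (i + (k:ZMod n) + 1) = !(x (i + (k:ZMod n))) := by
          cases hxk : x (i + (k:ZMod n)) <;> cases hxk1 : x (i + (k:ZMod n) + 1) <;> simp_all
        rw [show ((k+1:ℕ):ZMod n) = (k:ZMod n)+1 from by push_cast; ring, ← add_assoc] at *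
        rw [hflip, ih]
        have hm2 : k % 2 = 0 ∨ k % 2 = 1 := by omega
        rcases hm2 with hm2 | hm2
        · have e1 : (k+1) % 2 = 1 := by omega
          simp [hm2, e1]
        · have e1 : (k+1) % 2 = 0 := by omega
          simp [hm2, e1]
    have hodd : n % 2 = 1 := Nat.odd_iff.mp hn
    have k1 := key n
    rw [ZMod.natCast_self, add_zero, h0, hodd] at k1
    simp at k1
  obtain ⟨m, hm⟩ := hbreak
  have hex : ∃ k : ℕ, x (i + 5 + (k : ZMod n)) = x (i + 5 + (k:ZMod n) + 1) := by
    refine ⟨(m - (i+5)).val, ?_⟩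
    rw [ZMod.natCast_val, ZMod.cast_id]
    rw [show i + 5 + (m - (i+5)) = m from by ring]
    exact hm
  set k0 := Nat.find hex with hk0def
  have hk0 : x (i + 5 + (k0 : ZMod n)) = x (i + 5 + (k0:ZMod n) + 1) := Nat.find_spec hex
  have hmin : ∀ k, k < k0 → x (i + 5 + (k:ZMod n)) ≠ x (i + 5 + (k:ZMod n) + 1) :=
    fun k hk => Nat.find_min hex hk
  have A : ∀ s : ℕ, s ≤ 5 + k0 → x (i + (s : ZMod n)) = decide (s % 2 = 1) := by
    intro s
    induction s with
    | zero => intro _; simpa using h0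
    | succ s ih =>
      intro hs
      have hcast : ((s+1:ℕ) : ZMod n) = (s:ZMod n) + 1 := by push_cast; ring
      rcases Nat.lt_or_ge s 5 with hlt | hge
      · interval_cases s
        · rw [hcast]; simpa using h1
        · rw [hcast, show (i + (((1:ℕ):ZMod n) + 1)) = i + 2 from by push_cast; ring]
          simpa using h2
        · rw [hcast, show (i + (((2:ℕ):ZMod n) + 1)) = i + 3 from by push_cast; ring]
          simpa using h3
        · rw [hcast, show (i + (((3:ℕ):ZMod n) + 1)) = i + 4 from by push_cast; ring]
          simpa using h4
        · rw [hcast, show (i + (((4:ℕ):ZMod n) + 1)) = i + 5 from by push_cast; ring]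
          simpa using h5
      · have hs5 : s - 5 < k0 := by omega
        have hne := hmin (s - 5) hs5
        have e : i + 5 + ((s-5:ℕ) : ZMod n) = i + (s : ZMod n) := by
          have e2 : ((s:ℕ) : ZMod n) = ((5:ℕ):ZMod n) + ((s-5:ℕ):ZMod n) := by
            rw [← Nat.cast_add]
            congr 1
            omega
          rw [e2]; push_cast; ring
        rw [e] at hne
        have ihs := ih (by omega)
        have hflip : x (i + (s:ZMod n) + 1) = !(x (i + (s:ZMod n))) := by
          cases hx1 : x (i + (s:ZMod n)) <;> cases hx2 : x (i + (s:ZMod n) + 1) <;> simp_all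
        rw [hcast, ← add_assoc, hflip, ihs]
        have hm2 : s % 2 = 0 ∨ s % 2 = 1 := by omega
        rcases hm2 with hm2 | hm2
        · have e1 : (s+1) % 2 = 1 := by omega
          simp [hm2, e1]
        · have e1 : (s+1) % 2 = 0 := by omega
          simp [hm2, e1]
  rcases Nat.eq_zero_or_pos k0 with hk00 | hk0pos
  · have h6 : x (i + 6) = true := by
      have hb := hk0
      rw [hk00] at hb
      rw [Nat.cast_zero, add_zero] at hb
      rw [show i + 5 + 1 = i + 6 from by ring] at hb
      rw [← hb]
      exact h5
    refine ⟨i - 1, ?_⟩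
    rw [(show i - 1 + 1 = i from by ring), (show i - 1 + 2 = i + 1 from by ring), (show i - 1 + 3 = i + 2 from by ring), (show i - 1 + 4 = i + 3 from by ring), (show i - 1 + 5 = i + 4 from by ring), (show i - 1 + 6 = i + 5 from by ring), (show i - 1 + 7 = i + 6 from by ring)]
    rw [h0, h1, h2, h3, h4, h5, h6]
    cases hb : x (i - 1) <;> simp [qb]
  · set N := 5 + k0 with hNdef
    have hN6 : 6 ≤ N := by omega
    have hbreakval : x (i + (N:ZMod n) + 1) = x (i + (N:ZMod n)) := by
      have e : i + (N : ZMod n) = i + 5 + (k0 : ZMod n) := by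
        rw [hNdef]; push_cast; ring
      rw [e]
      exact hk0.symm
    refine ⟨i + ((N - 6 : ℕ) : ZMod n), ?_⟩
    have cell : ∀ t : ℕ, t ≤ 6 →
        x (i + ((N-6:ℕ):ZMod n) + (t : ZMod n)) = decide ((N - 6 + t) % 2 = 1) := by
      intro t ht
      have e : i + ((N-6:ℕ):ZMod n) + (t:ZMod n) = i + ((N-6+t : ℕ) : ZMod n) := by
        push_cast; ring
      rw [e]
      exact A (N-6+t) (by omega)
    have c0 : x (i + ((N-6:ℕ):ZMod n)) = decide ((N - 6 + 0) % 2 = 1) := by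
      have := cell 0 (by omega); simpa using this
    have c1 : x (i + ((N-6:ℕ):ZMod n) + 1) = decide ((N - 6 + 1) % 2 = 1) := by
      have := cell 1 (by omega); simpa using this
    have c2 : x (i + ((N-6:ℕ):ZMod n) + 2) = decide ((N - 6 + 2) % 2 = 1) := by
      have := cell 2 (by omega); simpa using this
    have c3 : x (i + ((N-6:ℕ):ZMod n) + 3) = decide ((N - 6 + 3) % 2 = 1) := by
      have := cell 3 (by omega); simpa using this
    have c4 : x (i + ((N-6:ℕ):ZMod n) + 4) = decide ((N - 6 + 4) % 2 = 1) := by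
      have := cell 4 (by omega); simpa using this
    have c5 : x (i + ((N-6:ℕ):ZMod n) + 5) = decide ((N - 6 + 5) % 2 = 1) := by
      have := cell 5 (by omega); simpa using this
    have c6 : x (i + ((N-6:ℕ):ZMod n) + 6) = decide ((N - 6 + 6) % 2 = 1) := by
      have := cell 6 (by omega); simpa using this
    have c7 : x (i + ((N-6:ℕ):ZMod n) + 7) = decide (N % 2 = 1) := by
      obtain ⟨M, hM⟩ : ∃ M, N = M + 6 := ⟨N - 6, by omega⟩
      have hM6 : N - 6 = M := by omega
      have e : i + ((N-6:ℕ):ZMod n) + 7 = i + (N:ZMod n) + 1 := by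
        rw [hM6, hM]; push_cast; ring
      rw [e, hbreakval]
      exact A N (by omega)
    rw [c0, c1, c2, c3, c4, c5, c6, c7]
    have hm2 : N % 2 = 0 ∨ N % 2 = 1 := by omega
    rcases hm2 with hm2 | hm2
    · have d0 : decide ((N-6+0) % 2 = 1) = false := by simp only [decide_eq_false_iff_not]; omega
      have d1 : decide ((N-6+1) % 2 = 1) = true := by simp only [decide_eq_true_eq]; omega
      have d2 : decide ((N-6+2) % 2 = 1) = false := by simp only [decide_eq_false_iff_not]; omega
      have d3 : decide ((N-6+3) % 2 = 1) = true := by simp only [decide_eq_true_eq]; omega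
      have d4 : decide ((N-6+4) % 2 = 1) = false := by simp only [decide_eq_false_iff_not]; omega
      have d5 : decide ((N-6+5) % 2 = 1) = true := by simp only [decide_eq_true_eq]; omega
      have d6 : decide ((N-6+6) % 2 = 1) = false := by simp only [decide_eq_false_iff_not]; omega
      have dN : decide (N % 2 = 1) = false := by simp only [decide_eq_false_iff_not]; omega
      rw [d0, d1, d2, d3, d4, d5, d6, dN]
      rfl
    · have d0 : decide ((N-6+0) % 2 = 1) = true := by simp only [decide_eq_true_eq]; omega
      have d1 : decide ((N-6+1) % 2 = 1) = false := by simp only [decide_eq_false_iff_not]; omega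
      have d2 : decide ((N-6+2) % 2 = 1) = true := by simp only [decide_eq_true_eq]; omega
      have d3 : decide ((N-6+3) % 2 = 1) = false := by simp only [decide_eq_false_iff_not]; omega
      have d4 : decide ((N-6+4) % 2 = 1) = true := by simp only [decide_eq_true_eq]; omega
      have d5 : decide ((N-6+5) % 2 = 1) = false := by simp only [decide_eq_false_iff_not]; omega
      have d6 : decide ((N-6+6) % 2 = 1) = true := by simp only [decide_eq_true_eq]; omega
      have dN : decide (N % 2 = 1) = true := by simp only [decide_eq_true_eq]; omega
      rw [d0, d1, d2, d3, d4, d5, d6, dN]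
      rfl

end Aux

/-- No odd cyclic configuration with forever-constant switch count
under the corrected BFO rule contains the block `010101`. -/
theorem Xs_no_alternating (n : ℕ) (hn : Odd n) (x : ZMod n → Bool)
    (hx : InXs x) :
    ¬ ∃ i : ZMod n, ContainsAt x i [false, true, false, true, false, true] := by
  rintro ⟨i, hcont⟩
  have hne : n ≠ 0 := by rcases hn with ⟨k, hk⟩; omega
  haveI : NeZero n := ⟨hne⟩
  have h0 : x (i + ((0:ℕ):ZMod n)) = false := hcont ⟨0, by norm_num⟩
  have h1 : x (i + ((1:ℕ):ZMod n)) = true := hcont ⟨1, by norm_num⟩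
  have h2 : x (i + ((2:ℕ):ZMod n)) = false := hcont ⟨2, by norm_num⟩
  have h3 : x (i + ((3:ℕ):ZMod n)) = true := hcont ⟨3, by norm_num⟩
  have h4 : x (i + ((4:ℕ):ZMod n)) = false := hcont ⟨4, by norm_num⟩
  have h5 : x (i + ((5:ℕ):ZMod n)) = true := hcont ⟨5, by norm_num⟩
  rw [Nat.cast_zero, add_zero] at h0
  rw [Nat.cast_one] at h1
  rw [Nat.cast_ofNat] at h2 h3 h4 h5
  obtain ⟨p, hp⟩ := exists_Q x hn i h0 h1 h2 h3 h4 h5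
  have hsite : ∀ j : ZMod n,
      cond (qb (x (j - 5)) (x (j - 4)) (x (j - 3)) (x (j - 2)) (x (j - 1)) (x j) (x (j + 1)) (x (j + 2))) (1:ℤ) 0 ≤ siteC x j + (Hfun x (j+1) - Hfun x j) :=
    fun j => site_ineq' x j
  have hqp : cond (qb (x (p+5-5)) (x (p+5-4)) (x (p+5-3)) (x (p+5-2)) (x (p+5-1)) (x (p+5))
      (x (p+5+1)) (x (p+5+2))) (1:ℤ) 0 = 1 := by
    rw [(show p + 5 - 5 = p from by ring),
      (show p + 5 - 4 = p + 1 from by ring),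
      (show p + 5 - 3 = p + 2 from by ring),
      (show p + 5 - 2 = p + 3 from by ring),
      (show p + 5 - 1 = p + 4 from by ring),
      (show p + 5 + 1 = p + 6 from by ring),
      (show p + 5 + 2 = p + 7 from by ring)]
    rw [hp]
    rfl
  have hsum1 : (1:ℤ) ≤ ∑ j : ZMod n, cond (qb (x (j - 5)) (x (j - 4)) (x (j - 3)) (x (j - 2)) (x (j - 1)) (x j) (x (j + 1)) (x (j + 2))) (1:ℤ) 0 := by
    have hnn : ∀ j ∈ Finset.univ, (0:ℤ) ≤ cond (qb (x (j - 5)) (x (j - 4)) (x (j - 3)) (x (j - 2)) (x (j - 1)) (x j) (x (j + 1)) (x (j + 2))) (1:ℤ) 0 := by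
      intro j _
      cases qb (x (j - 5)) (x (j - 4)) (x (j - 3)) (x (j - 2)) (x (j - 1)) (x j) (x (j + 1)) (x (j + 2)) <;> simp
    have hle := Finset.single_le_sum hnn (Finset.mem_univ (p+5))
    rw [hqp] at hle
    exact hle
  have hsum2 : ∑ j : ZMod n, cond (qb (x (j - 5)) (x (j - 4)) (x (j - 3)) (x (j - 2)) (x (j - 1)) (x j) (x (j + 1)) (x (j + 2))) (1:ℤ) 0
      ≤ ∑ j : ZMod n, (siteC x j + (Hfun x (j+1) - Hfun x j)) :=
    Finset.sum_le_sum (fun j _ => hsite j)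
  have hsum3 : ∑ j : ZMod n, (siteC x j + (Hfun x (j+1) - Hfun x j)) = ∑ j : ZMod n, siteC x j := by
    rw [Finset.sum_add_distrib, telescope' (Hfun x), add_zero]
  have hdrop := sw_drop x
  have hx1 := hx 1
  rw [Function.iterate_one] at hx1
  rw [hx1] at hdrop
  have : (1:ℤ) ≤ 0 := by
    calc (1:ℤ) ≤ ∑ j : ZMod n, cond (qb (x (j - 5)) (x (j - 4)) (x (j - 3)) (x (j - 2)) (x (j - 1)) (x j) (x (j + 1)) (x (j + 2))) (1:ℤ) 0 := hsum1
    _ ≤ ∑ j : ZMod n, (siteC x j + (Hfun x (j+1) - Hfun x j)) := hsum2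
    _ = ∑ j : ZMod n, siteC x j := hsum3
    _ = (switchCount x : ℤ) - switchCount x := hdrop.symm
    _ = 0 := by ring
  linarith
end

section
/- If every iterate F^t(x) of an odd cyclic configuration x is non-homogeneous and the only active transitions that can apply at each step are T_{1,2} and T_{3,4} (each of which increases the number of 1s by exactly two), then a contradiction arises: no such x exists, since the number of 1s is bounded by the finite length of x. -/
lemma active_window {n : ℕ} (x : ZMod n → Bool) (hfix : ∀ i, bfoGlobal x i = x i)
    (i : ZMod n) :
    ((x (i-3) && x (i-2) && x (i-1) && !x i && !x (i+1)) ||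
     (x (i-4) && x (i-3) && x (i-2) && !x (i-1) && !x i) ||
     (!x (i-3) && !x (i-2) && x (i-1) && !x i && !x (i+1)) ||
     (!x (i-4) && !x (i-3) && x (i-2) && !x (i-1) && !x i) ||
     (!x (i-1) && x i && x (i+1) && !x (i+2)) ||
     (!x (i-2) && x (i-1) && x i && !x (i+1)) ||
     (!x (i-3) && !x (i-2) && x (i-1) && !x i && x (i+1) && !x (i+2)) ||
     (!x (i-2) && !x (i-1) && x i && !x (i+1) && x (i+2) && !x (i+3)) ||
     (x (i-1) && x i && x (i+1) && !x (i+2) && x (i+3)) ||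
     (x (i-4) && x (i-3) && x (i-2) && !x (i-1) && x i && !x (i+1)) ||
     (x (i-4) && x (i-3) && x (i-2) && !x (i-1) && x i && x (i+1) && x (i+2)) ||
     (x (i-2) && x (i-1) && x i && !x (i+1) && x (i+2) && x (i+3) && !x (i+4))) = false := by
  have H := hfix i
  unfold bfoGlobal globalRule bfoLocal bfoActive at H
  have e0 : i + (((0:Fin 9):ℕ):ZMod n) - ((4:ℕ):ZMod n) = i - 4 := by
    rw [show (((0:Fin 9):ℕ)) = (0:ℕ) from rfl]; push_cast; ring
  have e1 : i + (((1:Fin 9):ℕ):ZMod n) - ((4:ℕ):ZMod n) = i - 3 := by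
    rw [show (((1:Fin 9):ℕ)) = (1:ℕ) from rfl]; push_cast; ring
  have e2 : i + (((2:Fin 9):ℕ):ZMod n) - ((4:ℕ):ZMod n) = i - 2 := by
    rw [show (((2:Fin 9):ℕ)) = (2:ℕ) from rfl]; push_cast; ring
  have e3 : i + (((3:Fin 9):ℕ):ZMod n) - ((4:ℕ):ZMod n) = i - 1 := by
    rw [show (((3:Fin 9):ℕ)) = (3:ℕ) from rfl]; push_cast; ring
  have e4 : i + (((4:Fin 9):ℕ):ZMod n) - ((4:ℕ):ZMod n) = i := by
    rw [show (((4:Fin 9):ℕ)) = (4:ℕ) from rfl]; push_cast; ring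
  have e5 : i + (((5:Fin 9):ℕ):ZMod n) - ((4:ℕ):ZMod n) = i + 1 := by
    rw [show (((5:Fin 9):ℕ)) = (5:ℕ) from rfl]; push_cast; ring
  have e6 : i + (((6:Fin 9):ℕ):ZMod n) - ((4:ℕ):ZMod n) = i + 2 := by
    rw [show (((6:Fin 9):ℕ)) = (6:ℕ) from rfl]; push_cast; ring
  have e7 : i + (((7:Fin 9):ℕ):ZMod n) - ((4:ℕ):ZMod n) = i + 3 := by
    rw [show (((7:Fin 9):ℕ)) = (7:ℕ) from rfl]; push_cast; ring
  have e8 : i + (((8:Fin 9):ℕ):ZMod n) - ((4:ℕ):ZMod n) = i + 4 := by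
    rw [show (((8:Fin 9):ℕ)) = (8:ℕ) from rfl]; push_cast; ring
  beta_reduce at H
  rw [e0, e1, e2, e3, e4, e5, e6, e7, e8] at H
  rcases hB : ((x (i-3) && x (i-2) && x (i-1) && !x i && !x (i+1)) ||
     (x (i-4) && x (i-3) && x (i-2) && !x (i-1) && !x i) ||
     (!x (i-3) && !x (i-2) && x (i-1) && !x i && !x (i+1)) ||
     (!x (i-4) && !x (i-3) && x (i-2) && !x (i-1) && !x i) ||
     (!x (i-1) && x i && x (i+1) && !x (i+2)) ||
     (!x (i-2) && x (i-1) && x i && !x (i+1)) ||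
     (!x (i-3) && !x (i-2) && x (i-1) && !x i && x (i+1) && !x (i+2)) ||
     (!x (i-2) && !x (i-1) && x i && !x (i+1) && x (i+2) && !x (i+3)) ||
     (x (i-1) && x i && x (i+1) && !x (i+2) && x (i+3)) ||
     (x (i-4) && x (i-3) && x (i-2) && !x (i-1) && x i && !x (i+1)) ||
     (x (i-4) && x (i-3) && x (i-2) && !x (i-1) && x i && x (i+1) && x (i+2)) ||
     (x (i-2) && x (i-1) && x i && !x (i+1) && x (i+2) && x (i+3) && !x (i+4))) with _ | _
  · rfl
  · rw [hB] at H; simp at H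

lemma fireT1 {n : ℕ} (x : ZMod n → Bool) (hfix : ∀ i, bfoGlobal x i = x i)
    (i : ZMod n) (h0 : x (i-3) = true) (h1 : x (i-2) = true) (h2 : x (i-1) = true) (h3 : x (i) = false) (h4 : x (i+1) = false) : False := by
  have H := active_window x hfix i
  rw [h0, h1, h2, h3, h4] at H
  simp at H

lemma fireT3 {n : ℕ} (x : ZMod n → Bool) (hfix : ∀ i, bfoGlobal x i = x i)
    (i : ZMod n) (h0 : x (i-3) = false) (h1 : x (i-2) = false) (h2 : x (i-1) = true) (h3 : x (i) = false) (h4 : x (i+1) = false) : False := by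
  have H := active_window x hfix i
  rw [h0, h1, h2, h3, h4] at H
  simp at H

lemma fireT5 {n : ℕ} (x : ZMod n → Bool) (hfix : ∀ i, bfoGlobal x i = x i)
    (i : ZMod n) (h0 : x (i-1) = false) (h1 : x (i) = true) (h2 : x (i+1) = true) (h3 : x (i+2) = false) : False := by
  have H := active_window x hfix i
  rw [h0, h1, h2, h3] at H
  simp at H

lemma fireT6 {n : ℕ} (x : ZMod n → Bool) (hfix : ∀ i, bfoGlobal x i = x i)
    (i : ZMod n) (h0 : x (i-2) = false) (h1 : x (i-1) = true) (h2 : x (i) = true) (h3 : x (i+1) = false) : False := by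
  have H := active_window x hfix i
  rw [h0, h1, h2, h3] at H
  simp at H

lemma fireT7 {n : ℕ} (x : ZMod n → Bool) (hfix : ∀ i, bfoGlobal x i = x i)
    (i : ZMod n) (h0 : x (i-3) = false) (h1 : x (i-2) = false) (h2 : x (i-1) = true) (h3 : x (i) = false) (h4 : x (i+1) = true) (h5 : x (i+2) = false) : False := by
  have H := active_window x hfix i
  rw [h0, h1, h2, h3, h4, h5] at H
  simp at H

lemma fireT9 {n : ℕ} (x : ZMod n → Bool) (hfix : ∀ i, bfoGlobal x i = x i)
    (i : ZMod n) (h0 : x (i-1) = true) (h1 : x (i) = true) (h2 : x (i+1) = true) (h3 : x (i+2) = false) (h4 : x (i+3) = true) : False := by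
  have H := active_window x hfix i
  rw [h0, h1, h2, h3, h4] at H
  simp at H


lemma baseB {n : ℕ} (x : ZMod n → Bool) (hfix : ∀ i, bfoGlobal x i = x i) (c : ZMod n)
    (hc : x c = true) (hc1 : x (c+1) = false) (hc2 : x (c+2) = false) :
    x (c-2) = true ∧ x (c-1) = false := by
  cases hb2 : x (c-2) with
  | true =>
    cases hb1 : x (c-1) with
    | false => exact ⟨rfl, rfl⟩
    | true =>
      exact (fireT1 x hfix (c+1)
        (by rw [show c+1-3 = c-2 by ring]; exact hb2)
        (by rw [show c+1-2 = c-1 by ring]; exact hb1)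
        (by rw [show c+1-1 = c by ring]; exact hc)
        hc1
        (by rw [show c+1+1 = c+2 by ring]; exact hc2)).elim
  | false =>
    cases hb1 : x (c-1) with
    | true =>
      exact (fireT6 x hfix c hb2 hb1 hc hc1).elim
    | false =>
      exact (fireT3 x hfix (c+1)
        (by rw [show c+1-3 = c-2 by ring]; exact hb2)
        (by rw [show c+1-2 = c-1 by ring]; exact hb1)
        (by rw [show c+1-1 = c by ring]; exact hc)
        hc1
        (by rw [show c+1+1 = c+2 by ring]; exact hc2)).elim

lemma stepA {n : ℕ} (x : ZMod n → Bool) (hfix : ∀ i, bfoGlobal x i = x i) (d : ZMod n)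
    (k1 : x d = true) (k2 : x (d+1) = false) (k3 : x (d+2) = true) (k4 : x (d+3) = false) :
    x (d-2) = true ∧ x (d-1) = false := by
  cases hb2 : x (d-2) with
  | true =>
    cases hb1 : x (d-1) with
    | false => exact ⟨rfl, rfl⟩
    | true =>
      exact (fireT9 x hfix (d-1)
        (by rw [show d-1-1 = d-2 by ring]; exact hb2)
        hb1
        (by rw [show d-1+1 = d by ring]; exact k1)
        (by rw [show d-1+2 = d+1 by ring]; exact k2)
        (by rw [show d-1+3 = d+2 by ring]; exact k3)).elim
  | false =>
    cases hb1 : x (d-1) with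
    | true =>
      exact (fireT6 x hfix d hb2 hb1 k1 k2).elim
    | false =>
      exact (fireT7 x hfix (d+1)
        (by rw [show d+1-3 = d-2 by ring]; exact hb2)
        (by rw [show d+1-2 = d-1 by ring]; exact hb1)
        (by rw [show d+1-1 = d by ring]; exact k1)
        k2
        (by rw [show d+1+1 = d+2 by ring]; exact k3)
        (by rw [show d+1+2 = d+3 by ring]; exact k4)).elim

lemma no100 {n : ℕ} [NeZero n] (hn : Odd n) (x : ZMod n → Bool)
    (hfix : ∀ i, bfoGlobal x i = x i) (c : ZMod n)
    (hc : x c = true) (hc1 : x (c+1) = false) (hc2 : x (c+2) = false) : False := by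
  have P : ∀ m : ℕ,
      (x (c - 2*((m:ℕ):ZMod n)) = true ∧ x (c - 2*((m:ℕ):ZMod n) + 1) = false) ∧
      (x (c - 2*(((m+1):ℕ):ZMod n)) = true ∧ x (c - 2*(((m+1):ℕ):ZMod n) + 1) = false) := by
    intro m
    induction m with
    | zero =>
      refine ⟨⟨?_, ?_⟩, ?_, ?_⟩
      · rw [show c - 2*(((0:ℕ)):ZMod n) = c by push_cast; ring]; exact hc
      · rw [show c - 2*(((0:ℕ)):ZMod n) + 1 = c + 1 by push_cast; ring]; exact hc1
      · rw [show c - 2*(((0+1:ℕ)):ZMod n) = c - 2 by push_cast; ring]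
        exact (baseB x hfix c hc hc1 hc2).1
      · rw [show c - 2*(((0+1:ℕ)):ZMod n) + 1 = c - 1 by push_cast; ring]
        exact (baseB x hfix c hc hc1 hc2).2
    | succ k ih =>
      refine ⟨ih.2, ?_, ?_⟩
      · rw [show c - 2*(((k+1+1:ℕ)):ZMod n) = (c - 2*(((k+1:ℕ)):ZMod n)) - 2 by push_cast; ring]
        refine (stepA x hfix (c - 2*(((k+1:ℕ)):ZMod n)) ih.2.1 ih.2.2 ?_ ?_).1
        · rw [show c - 2*(((k+1:ℕ)):ZMod n) + 2 = c - 2*((k:ℕ):ZMod n) by push_cast; ring]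
          exact ih.1.1
        · rw [show c - 2*(((k+1:ℕ)):ZMod n) + 3 = c - 2*((k:ℕ):ZMod n) + 1 by push_cast; ring]
          exact ih.1.2
      · rw [show c - 2*(((k+1+1:ℕ)):ZMod n) + 1 = (c - 2*(((k+1:ℕ)):ZMod n)) - 1 by push_cast; ring]
        refine (stepA x hfix (c - 2*(((k+1:ℕ)):ZMod n)) ih.2.1 ih.2.2 ?_ ?_).2
        · rw [show c - 2*(((k+1:ℕ)):ZMod n) + 2 = c - 2*((k:ℕ):ZMod n) by push_cast; ring]
          exact ih.1.1
        · rw [show c - 2*(((k+1:ℕ)):ZMod n) + 3 = c - 2*((k:ℕ):ZMod n) + 1 by push_cast; ring]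
          exact ih.1.2
  have hn1 : 1 ≤ n := by
    rcases hn with ⟨k, hk⟩; omega
  have h2m : (2*((n-1)/2) : ℕ) = n - 1 := by
    rcases hn with ⟨k, hk⟩; omega
  have key := (P ((n-1)/2)).1.1
  have : (2:ZMod n) * ((((n-1)/2 : ℕ)):ZMod n) = -1 := by
    have : ((2*((n-1)/2) : ℕ) : ZMod n) = ((n - 1 : ℕ) : ZMod n) := by rw [h2m]
    rw [Nat.cast_mul, Nat.cast_sub hn1, ZMod.natCast_self] at this
    push_cast at this ⊢
    rw [this]; ring
  rw [this] at key
  rw [show c - -1 = c + 1 by ring] at key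
  rw [key] at hc1
  simp at hc1

lemma no110 {n : ℕ} [NeZero n] (hn : Odd n) (x : ZMod n → Bool)
    (hfix : ∀ i, bfoGlobal x i = x i) (c : ZMod n)
    (hc : x c = true) (hc1 : x (c+1) = true) (hc2 : x (c+2) = false) : False := by
  cases hb : x (c-1) with
  | false => exact fireT5 x hfix c hb hc hc1 hc2
  | true =>
    cases hd : x (c+3) with
    | true => exact fireT9 x hfix c hb hc hc1 hc2 hd
    | false =>
      exact no100 hn x hfix (c+1) hc1
        (by rw [show c+1+1 = c+2 by ring]; exact hc2)
        (by rw [show c+1+2 = c+3 by ring]; exact hd)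

lemma fixed_const {n : ℕ} [NeZero n] (hn : Odd n) (x : ZMod n → Bool)
    (hfix : ∀ i, bfoGlobal x i = x i) :
    (∀ i, x i = false) ∨ (∀ i, x i = true) := by
  by_cases h1 : ∀ i, x i = true
  · right; exact h1
  left
  push_neg at h1
  obtain ⟨j, hj'⟩ := h1
  have hj : x j = false := by
    cases h : x j with
    | false => rfl
    | true => exact absurd h hj'
  have key3 : ∀ i, x (i+2) = false → x i = false := by
    intro i h2
    cases h0 : x i with
    | false => rfl
    | true =>
      cases hi1 : x (i+1) with
      | false => exact (no100 hn x hfix i h0 hi1 h2).elim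
      | true => exact (no110 hn x hfix i h0 hi1 h2).elim
  have back : ∀ m : ℕ, x (j - 2*((m:ℕ):ZMod n)) = false := by
    intro m
    induction m with
    | zero => rw [show j - 2*(((0:ℕ)):ZMod n) = j by push_cast; ring]; exact hj
    | succ k ih =>
      apply key3
      rw [show j - 2*(((k+1:ℕ)):ZMod n) + 2 = j - 2*((k:ℕ):ZMod n) by push_cast; ring]
      exact ih
  intro i
  have hn1 : 1 ≤ n := by rcases hn with ⟨k, hk⟩; omega
  have h2 : (2*((n+1)/2) : ℕ) = n+1 := by rcases hn with ⟨k, hk⟩; omega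
  have hm : (2:ZMod n) * ((((j-i).val * ((n+1)/2) : ℕ)):ZMod n) = j - i := by
    have e1 : ((2*((n+1)/2) : ℕ) : ZMod n) = ((n+1 : ℕ) : ZMod n) := by rw [h2]
    push_cast [ZMod.natCast_self] at e1
    rw [zero_add] at e1
    calc (2:ZMod n) * ((((j-i).val * ((n+1)/2) : ℕ)):ZMod n)
        = (((j-i).val : ℕ) : ZMod n) * ((2:ZMod n) * ((((n+1)/2 : ℕ)):ZMod n)) := by
          push_cast; ring
      _ = (((j-i).val : ℕ) : ZMod n) * 1 := by rw [e1]
      _ = j - i := by rw [mul_one, ZMod.natCast_val, ZMod.cast_id]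
  have := back ((j-i).val * ((n+1)/2))
  rw [hm] at this
  rw [show j - (j - i) = i by ring] at this
  exact this

/-- There is no odd cyclic configuration all of whose iterates are
non-homogeneous while every cell change at every step is produced by one of the
transitions `T_{1,2}`, `T_{3,4}` (which increase the number of 1s by two). -/
theorem no_forever_T12_T34 (n : ℕ) (hn : Odd n) :
    ¬ ∃ x : ZMod n → Bool,
      (∀ t : ℕ, (bfoGlobal^[t] x ≠ fun _ => false) ∧
                (bfoGlobal^[t] x ≠ fun _ => true)) ∧
      (∀ (t : ℕ) (i : ZMod n), bfoGlobal^[t+1] x i ≠ bfoGlobal^[t] x i →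
        MatchT1234 (bfoGlobal^[t] x) i) := by
  
  rintro ⟨x, hnh, hT⟩
  have hn0 : n ≠ 0 := by rcases hn with ⟨k, hk⟩; omega
  haveI : NeZero n := ⟨hn0⟩
  have mono : ∀ t i, bfoGlobal^[t] x i = true → bfoGlobal^[t+1] x i = true := by
    intro t i h
    by_contra hne
    have hd : bfoGlobal^[t+1] x i ≠ bfoGlobal^[t] x i := by
      intro he; rw [he] at hne; exact hne h
    rcases hT t i hd with ⟨_,_,_,h4,_⟩|⟨_,_,_,_,h4⟩|⟨_,_,_,h4,_⟩|⟨_,_,_,_,h4⟩ <;>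
      simp [h] at h4
  have card_lt : ∀ t,
      (Finset.univ.filter (fun i => bfoGlobal^[t] x i = true)).card <
      (Finset.univ.filter (fun i => bfoGlobal^[t+1] x i = true)).card := by
    intro t
    have hss : (Finset.univ.filter (fun i => bfoGlobal^[t] x i = true)) ⊆
        (Finset.univ.filter (fun i => bfoGlobal^[t+1] x i = true)) := by
      intro i hi
      simp only [Finset.mem_filter, Finset.mem_univ, true_and] at hi ⊢
      exact mono t i hi
    have hne : ∃ i, bfoGlobal^[t+1] x i ≠ bfoGlobal^[t] x i := by
      by_contra hfx
      push_neg at hfx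
      have hfix : ∀ i, bfoGlobal (bfoGlobal^[t] x) i = (bfoGlobal^[t] x) i := by
        intro i
        have h := hfx i
        rwa [Function.iterate_succ_apply'] at h
      rcases fixed_const hn _ hfix with hF | hTr
      · exact (hnh t).1 (funext hF)
      · exact (hnh t).2 (funext hTr)
    obtain ⟨i0, hi0⟩ := hne
    have h0 : bfoGlobal^[t] x i0 = false := by
      cases h : bfoGlobal^[t] x i0 with
      | false => rfl
      | true => exact absurd (mono t i0 h) (fun hh => hi0 (by rw [hh, h]))
    have h1 : bfoGlobal^[t+1] x i0 = true := by
      cases h : bfoGlobal^[t+1] x i0 with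
      | true => rfl
      | false => rw [h, h0] at hi0; exact absurd rfl hi0
    apply Finset.card_lt_card
    refine ⟨hss, fun hsub => ?_⟩
    have hmem : i0 ∈ Finset.univ.filter (fun i => bfoGlobal^[t+1] x i = true) := by
      simp only [Finset.mem_filter, Finset.mem_univ, true_and]
      exact h1
    have := hsub hmem
    simp only [Finset.mem_filter, Finset.mem_univ, true_and] at this
    rw [this] at h0
    exact Bool.noConfusion h0
  have grow : ∀ t, t ≤ (Finset.univ.filter (fun i => bfoGlobal^[t] x i = true)).card := by
    intro t
    induction t with
    | zero => exact Nat.zero_le _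
    | succ k ih => exact Nat.lt_of_le_of_lt ih (card_lt k)
  have hbound := grow (n+1)
  have hle : (Finset.univ.filter (fun i => bfoGlobal^[n+1] x i = true)).card ≤ n := by
    calc (Finset.univ.filter (fun i => bfoGlobal^[n+1] x i = true)).card
        ≤ (Finset.univ : Finset (ZMod n)).card := Finset.card_filter_le _ _
      _ = Fintype.card (ZMod n) := rfl
      _ = n := ZMod.card n
  omega
end
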